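/- arXiv:2406.00354 — 6 statements merged into one kernel-verified Lean document; each statement's English description precedes it below -/
import Mathlib

section
/- Let α < N, 0 < σ < N, b > 0 and θ ∈ ℝ. Let ω be a Borel measure on Ω for which there exist c₁, c₂ > 0 with c₁ · max{d(x), s}^b · max{d_Σ(x), s}^θ · s^N ≤ ω(B(x,s) ∩ Ω) ≤ c₂ · max{d(x), s}^b · max{d_Σ(x), s}^θ · s^N for all x ∈ Ω and 0 < s ≤ 4 diam(Ω). Set M := (4 diam(Ω))^{N−α}. Then there exist constants C', C'' > 0, depending only on N, α, σ, b, θ, c₁, c₂ and Ω, such that for every x ∈ Ω and s > 0: (i) if s ≤ d(x)^N d_Σ(x)^{−α}, then C' ≤ ω(𝔅(x,s)) / ( d(x)^{b − σN/(N−σ)} d_Σ(x)^{θ + αN/(N−σ)} s^{N/(N−σ)} ) ≤ C''; (ii) if d(x)^N d_Σ(x)^{−α} < s ≤ d_Σ(x)^{N−α}, then C' ≤ ω(𝔅(x,s)) / ( s^{(b+N)/N} d_Σ(x)^{θ + α(b+N)/N} ) ≤ C''; (iii) if d_Σ(x)^{N−α} ≤ s ≤ M, then C' ≤ ω(𝔅(x,s))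 / s^{(b+θ+N)/(N−α)} ≤ C''; (iv) if s ≥ M, then C' ≤ ω(𝔅(x,s)) / M^{(b+θ+N)/(N−α)} ≤ C''. -/
/-!
Fix `x ∈ Ω` and put `d = d(x) ≤ e = d_Σ(x)`. Since `d(y) ≤ d + |x - y|` and `d_Σ(y) ≤ e + |x - y|`,
`𝒩_{α,σ}(y,x)⁻¹` agrees, up to the factors `2^{-|α|}` and `2^{σ+|α|}`, with the radial profile
`F(r) = r^{N-σ} max{r,d}^σ / max{r,e}^α` at `r = |x - y|`. Under `r ↦ L r`, `L ≥ 1`, the profile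
grows at least by `L^κ`, `κ = min{N-σ, N-α} > 0`, so with `Λ^κ = 2^{σ+|α|}` the quasi-ball
`𝔅(x, F(R))` contains `B(x, R/Λ) ∩ Ω \ {x}` and lies within distance `ΛR` of `x`. The hypothesis
on `ω` says `ω(B(x,ρ) ∩ Ω) ≈ V(ρ) = max{d,ρ}^b max{e,ρ}^θ ρ^N`, where `V` is doubling, and it
forbids an atom at `x`; hence `ω(𝔅(x, F(R))) ≈ V(R)` for `R ≤ 4 diam Ω`. Regimes (i)-(iii) are
the cases `R ≤ d`, `d ≤ R ≤ e` and `e ≤ R ≤ 4 diam Ω` of solving `F(R) = s`, where `F` and `V`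
are pure powers of `R`; in regime (iv) `𝔅(x, s)` lies between `𝔅(x, M)` and `Ω ⊆ B(x, 4 diam Ω)`.
-/

open MeasureTheory Set Metric

/-- The kernel `𝒩_{α,σ}(x,y) = max{|x−y|, d_Σ(x), d_Σ(y)}^α /
(|x−y|^{N−σ} · max{|x−y|, d(x), d(y)}^σ)`. -/
noncomputable def NKernel (N : ℕ) (α σ : ℝ) (Ω S : Set (EuclideanSpace ℝ (Fin N)))
    (x y : EuclideanSpace ℝ (Fin N)) : ℝ :=
  (max (dist x y) (max (infDist x S) (infDist y S))) ^ α /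
    (dist x y ^ ((N : ℝ) - σ) *
      (max (dist x y) (max (infDist x (frontier Ω)) (infDist y (frontier Ω)))) ^ σ)

/-- The quasi-ball `𝔅(x,s) = {y ∈ Ω : y ≠ x and 𝒩_{α,σ}(y,x)⁻¹ ≤ s}`. -/
def quasiBall (N : ℕ) (α σ : ℝ) (Ω S : Set (EuclideanSpace ℝ (Fin N)))
    (x : EuclideanSpace ℝ (Fin N)) (s : ℝ) : Set (EuclideanSpace ℝ (Fin N)) :=
  {y ∈ Ω | y ≠ x ∧ (NKernel N α σ Ω S y x)⁻¹ ≤ s}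

open Real Filter Topology

lemma rpow_le_rpow_abs_mul_rpow {u m K : ℝ} (γ : ℝ) (hu : 0 < u) (hK : 1 ≤ K)
    (hum : u ≤ m) (hmK : m ≤ K * u) : m ^ γ ≤ K ^ |γ| * u ^ γ := by
  rcases le_or_gt 0 γ with hγ | hγ
  · rw [abs_of_nonneg hγ, ← mul_rpow (by positivity) hu.le]
    exact rpow_le_rpow (hu.le.trans hum) hmK hγ
  · have hK' : 1 ≤ K ^ |γ| := one_le_rpow hK (abs_nonneg γ)
    calc m ^ γ ≤ u ^ γ := rpow_le_rpow_of_nonpos hu hum hγ.le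
      _ ≤ K ^ |γ| * u ^ γ := le_mul_of_one_le_left (by positivity) hK'

lemma rpow_le_rpow_abs_mul_rpow' {u m K : ℝ} (γ : ℝ) (hu : 0 < u) (hK : 1 ≤ K)
    (hum : u ≤ m) (hmK : m ≤ K * u) : u ^ γ ≤ K ^ |γ| * m ^ γ := by
  have hm : 0 < m := hu.trans_le hum
  rcases le_or_gt 0 γ with hγ | hγ
  · calc u ^ γ ≤ m ^ γ := rpow_le_rpow hu.le hum hγ
      _ ≤ K ^ |γ| * m ^ γ := le_mul_of_one_le_left (by positivity) (one_le_rpow hK (abs_nonneg γ))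
  · have h : K ^ γ * u ^ γ ≤ m ^ γ := by
      rw [← mul_rpow (by positivity) hu.le]
      exact rpow_le_rpow_of_nonpos hm hmK hγ.le
    rw [abs_of_neg hγ, rpow_neg (by positivity)]
    exact (le_inv_mul_iff₀ (by positivity)).2 h

lemma max_le_mul_max {K ρ ρ' : ℝ} (a : ℝ) (hK : 1 ≤ K) (hρ : 0 ≤ ρ) (hρ' : ρ' ≤ K * ρ) :
    max a ρ' ≤ K * max a ρ :=
  max_le ((le_max_left a ρ).trans (le_mul_of_one_le_left (hρ.trans (le_max_right a ρ)) hK))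
    (hρ'.trans (mul_le_mul_of_nonneg_left (le_max_right a ρ) (zero_le_one.trans hK)))

lemma max_max_le_two_mul_max {r a a' : ℝ} (hr : 0 ≤ r) (ha' : a' ≤ a + r) :
    max r (max a' a) ≤ 2 * max r a := by
  have := le_max_left r a
  have := le_max_right r a
  exact max_le (by linarith) (max_le (by linarith) (by linarith))

lemma max_mul_max_le_max_mul_max {r r' d e : ℝ} (hd : 0 ≤ d) (hde : d ≤ e) (hr : r ≤ r') :
    max r' e * max r d ≤ max r' d * max r e := by
  have he : 0 ≤ e := hd.trans hde
  rcases le_total r' e with h | h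
  · rw [max_eq_right h, max_eq_right (hr.trans h), mul_comm]
    exact mul_le_mul_of_nonneg_right (max_le_max hr le_rfl) he
  · rw [max_eq_left h, max_eq_left (hde.trans h)]
    exact mul_le_mul_of_nonneg_left (max_le_max le_rfl hde) (he.trans h)

noncomputable def kernelProfile (n σ α d e r : ℝ) : ℝ :=
  r ^ (n - σ) * max r d ^ σ / max r e ^ α

noncomputable def volumeProfile (b θ n d e ρ : ℝ) : ℝ :=
  max d ρ ^ b * max e ρ ^ θ * ρ ^ n

section Profiles

variable {n σ α b θ d e : ℝ}

lemma kernelProfile_eq_exp {r : ℝ} (hr : 0 < r) :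
    kernelProfile n σ α d e r =
      exp (log r * (n - σ) + log (max r d) * σ - log (max r e) * α) := by
  rw [kernelProfile, rpow_def_of_pos hr, rpow_def_of_pos (lt_max_of_lt_left hr),
    rpow_def_of_pos (lt_max_of_lt_left hr), exp_sub, exp_add]

lemma kernelProfile_pos {r : ℝ} (hr : 0 < r) : 0 < kernelProfile n σ α d e r := by
  rw [kernelProfile_eq_exp hr]
  exact exp_pos _

lemma rpow_min_mul_kernelProfile_le (hσ : 0 ≤ σ) (hd : 0 ≤ d) (hde : d ≤ e) {r L : ℝ}
    (hr : 0 < r) (hL : 1 ≤ L) :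
    L ^ min (n - σ) (n - α) * kernelProfile n σ α d e r ≤ kernelProfile n σ α d e (L * r) := by
  have hL0 : 0 < L := zero_lt_one.trans_le hL
  have hLr : r ≤ L * r := le_mul_of_one_le_left hr.le hL
  have pos : ∀ {a}, 0 < max r a := lt_max_of_lt_left hr
  have posL : ∀ {a}, 0 < max (L * r) a := lt_max_of_lt_left (hr.trans_le hLr)
  rw [kernelProfile_eq_exp hr, kernelProfile_eq_exp (hr.trans_le hLr), rpow_def_of_pos hL0,
    ← exp_add, exp_le_exp, log_mul hL0.ne' hr.ne']
  have hv₀ : 0 ≤ log (max (L * r) e) - log (max r e) := by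
    linarith [log_le_log pos (max_le_max_right e hLr)]
  have hvu : log (max (L * r) e) - log (max r e) ≤ log (max (L * r) d) - log (max r d) := by
    have := log_le_log (mul_pos posL pos) (max_mul_max_le_max_mul_max hd hde hLr)
    rw [log_mul posL.ne' pos.ne', log_mul posL.ne' pos.ne'] at this
    linarith
  have huℓ : log (max (L * r) d) - log (max r d) ≤ log L := by
    rw [sub_le_iff_le_add, ← log_mul hL0.ne' pos.ne', max_comm (L * r), max_comm r]
    exact log_le_log (lt_max_of_lt_right (hr.trans_le hLr)) (max_le_mul_max d hL hr.le le_rfl)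
  -- With `u`, `v` the increments of `log (max · d)`, `log (max · e)` from `r` to `L * r`, the
  -- claim reads `κ ℓ ≤ (n - σ) ℓ + σ u - α v` with `ℓ = log L`, and `0 ≤ v ≤ u ≤ ℓ`.
  have hℓ : 0 ≤ log L := log_nonneg hL
  have h₁ := mul_le_mul_of_nonneg_left (min_le_left (n - σ) (n - α)) hℓ
  have h₂ := mul_le_mul_of_nonneg_left (min_le_right (n - σ) (n - α)) hℓ
  have h₃ := mul_le_mul_of_nonneg_left hvu hσ
  rcases le_total α σ with h | h
  · linarith [mul_le_mul_of_nonneg_left hv₀ (sub_nonneg.2 h)]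
  · linarith [mul_le_mul_of_nonneg_left (hvu.trans huℓ) (sub_nonneg.2 h)]

lemma kernelProfile_strictMonoOn (hσ : 0 ≤ σ) (hσn : σ < n) (hαn : α < n) (hd : 0 ≤ d)
    (hde : d ≤ e) : StrictMonoOn (kernelProfile n σ α d e) (Ioi 0) := by
  intro r (hr : 0 < r) r' _ hrr'
  have hL : 1 < r' / r := (one_lt_div hr).2 hrr'
  have hgrow := rpow_min_mul_kernelProfile_le (n := n) (α := α) hσ hd hde hr hL.le
  rw [div_mul_cancel₀ _ hr.ne'] at hgrow
  have hκ : 1 < (r' / r) ^ min (n - σ) (n - α) :=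
    one_lt_rpow hL (lt_min (by linarith) (by linarith))
  exact (lt_mul_of_one_lt_left (kernelProfile_pos hr) hκ).trans_le hgrow

lemma kernelProfile_comparison (hσ : 0 ≤ σ) {r P Q : ℝ} (hr : 0 < r)
    (hP : max r d ≤ P) (hP' : P ≤ 2 * max r d) (hQ : max r e ≤ Q) (hQ' : Q ≤ 2 * max r e) :
    kernelProfile n σ α d e r ≤ 2 ^ |α| * (r ^ (n - σ) * P ^ σ / Q ^ α) ∧
      r ^ (n - σ) * P ^ σ / Q ^ α ≤ 2 ^ (σ + |α|) * kernelProfile n σ α d e r := by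
  have hA : 0 < max r d := lt_max_of_lt_left hr
  have hB : 0 < max r e := lt_max_of_lt_left hr
  have hP0 : 0 < P := hA.trans_le hP
  have hQ0 : 0 < Q := hB.trans_le hQ
  have hrσ : 0 < r ^ (n - σ) := rpow_pos_of_pos hr _
  constructor
  · calc kernelProfile n σ α d e r
        ≤ r ^ (n - σ) * P ^ σ / (Q ^ α / 2 ^ |α|) := by
          refine div_le_div₀ (by positivity) ?_ (by positivity) ?_
          · exact mul_le_mul_of_nonneg_left (rpow_le_rpow hA.le hP hσ) hrσ.le
          · exact (div_le_iff₀' (by positivity)).2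
              (rpow_le_rpow_abs_mul_rpow α hB one_le_two hQ hQ')
      _ = 2 ^ |α| * (r ^ (n - σ) * P ^ σ / Q ^ α) := by field_simp
  · calc r ^ (n - σ) * P ^ σ / Q ^ α
        ≤ r ^ (n - σ) * (2 ^ σ * max r d ^ σ) / (max r e ^ α / 2 ^ |α|) := by
          refine div_le_div₀ (by positivity) ?_ (by positivity) ?_
          · refine mul_le_mul_of_nonneg_left ?_ hrσ.le
            simpa only [abs_of_nonneg hσ] using rpow_le_rpow_abs_mul_rpow σ hA one_le_two hP hP'
          · exact (div_le_iff₀' (by positivity)).2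
              (rpow_le_rpow_abs_mul_rpow' α hB one_le_two hQ hQ')
      _ = 2 ^ (σ + |α|) * kernelProfile n σ α d e r := by
          rw [kernelProfile, rpow_add two_pos]; field_simp

lemma volumeProfile_le_rpow_mul (hb : 0 ≤ b) (hn : 0 ≤ n) {ρ ρ' K : ℝ} (hρ : 0 < ρ)
    (hK : 1 ≤ K) (hρρ' : ρ ≤ ρ') (hρ'K : ρ' ≤ K * ρ) :
    volumeProfile b θ n d e ρ' ≤ K ^ (b + |θ| + n) * volumeProfile b θ n d e ρ := by
  have hK0 : 0 < K := zero_lt_one.trans_le hK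
  have hd : max d ρ' ^ b ≤ K ^ b * max d ρ ^ b := by
    rw [← mul_rpow hK0.le (hρ.le.trans (le_max_right d ρ))]
    exact rpow_le_rpow (hρ.le.trans ((le_max_right d ρ).trans (max_le_max_left d hρρ')))
      (max_le_mul_max d hK hρ.le hρ'K) hb
  have he : max e ρ' ^ θ ≤ K ^ |θ| * max e ρ ^ θ :=
    rpow_le_rpow_abs_mul_rpow θ (lt_max_of_lt_right hρ) hK (max_le_max_left e hρρ')
      (max_le_mul_max e hK hρ.le hρ'K)
  have hρn : ρ' ^ n ≤ K ^ n * ρ ^ n := by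
    rw [← mul_rpow hK0.le hρ.le]
    exact rpow_le_rpow (hρ.le.trans hρρ') hρ'K hn
  have hρ' : 0 < ρ' := hρ.trans_le hρρ'
  calc volumeProfile b θ n d e ρ'
      ≤ (K ^ b * max d ρ ^ b) * (K ^ |θ| * max e ρ ^ θ) * (K ^ n * ρ ^ n) := by
        unfold volumeProfile; gcongr
    _ = K ^ (b + |θ| + n) * volumeProfile b θ n d e ρ := by
        rw [rpow_add hK0, rpow_add hK0, volumeProfile]; ring

lemma exists_profiles_eq_of_le (hσn : σ < n) (hd : 0 < d) (hde : d ≤ e) {s : ℝ} (hs : 0 < s)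
    (hsd : s ≤ d ^ n * e ^ (-α)) :
    ∃ R, 0 < R ∧ R ≤ d ∧ kernelProfile n σ α d e R = s ∧
      volumeProfile b θ n d e R =
        d ^ (b - σ * n / (n - σ)) * e ^ (θ + α * n / (n - σ)) * s ^ (n / (n - σ)) := by
  have he : 0 < e := hd.trans_le hde
  have hnσ : 0 < n - σ := sub_pos.2 hσn
  have hX : 0 < s * e ^ α / d ^ σ := by positivity
  set R := (s * e ^ α / d ^ σ) ^ (n - σ)⁻¹
  have hR : 0 < R := by positivity
  have hRpow : R ^ (n - σ) = s * e ^ α / d ^ σ := rpow_inv_rpow hX.le hnσ.ne'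
  have hRd : R ≤ d := by
    refine (rpow_le_rpow_iff hR.le hd.le hnσ).1 ?_
    rw [hRpow, rpow_sub hd, div_le_div_iff_of_pos_right (by positivity)]
    calc s * e ^ α ≤ d ^ n * e ^ (-α) * e ^ α := by gcongr
      _ = d ^ n := by rw [rpow_neg he.le, inv_mul_cancel_right₀ (by positivity)]
  refine ⟨R, hR, hRd, ?_, ?_⟩
  · rw [kernelProfile, max_eq_right hRd, max_eq_right (hRd.trans hde), hRpow]
    field_simp
  · have hRn : R ^ n = (s * e ^ α / d ^ σ) ^ (n / (n - σ)) := by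
      rw [← rpow_mul hX.le, inv_mul_eq_div]
    rw [volumeProfile, max_eq_left hRd, max_eq_left (hRd.trans hde), hRn,
      div_rpow (by positivity) (by positivity), mul_rpow hs.le (by positivity), ← rpow_mul he.le,
      ← rpow_mul hd.le, rpow_sub hd, rpow_add he]
    field_simp

lemma exists_profiles_eq_of_lt_of_le (hn : 0 < n) (hd : 0 < d) (hde : d ≤ e) {s : ℝ}
    (hds : d ^ n * e ^ (-α) < s) (hse : s ≤ e ^ (n - α)) :
    ∃ R, 0 < R ∧ R ≤ e ∧ kernelProfile n σ α d e R = s ∧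
      volumeProfile b θ n d e R = s ^ ((b + n) / n) * e ^ (θ + α * (b + n) / n) := by
  have he : 0 < e := hd.trans_le hde
  have hs : 0 < s := lt_of_le_of_lt (by positivity) hds
  have hX : 0 < s * e ^ α := by positivity
  set R := (s * e ^ α) ^ n⁻¹
  have hR : 0 < R := by positivity
  have hRpow : R ^ n = s * e ^ α := rpow_inv_rpow hX.le hn.ne'
  have hcancel : e ^ (-α) * e ^ α = 1 := by rw [← rpow_add he, neg_add_cancel, rpow_zero]
  have hdR : d ≤ R := by
    refine (rpow_le_rpow_iff hd.le hR.le hn).1 ?_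
    calc d ^ n = d ^ n * e ^ (-α) * e ^ α := by rw [mul_assoc, hcancel, mul_one]
      _ ≤ R ^ n := by rw [hRpow]; gcongr
  have hRe : R ≤ e := by
    refine (rpow_le_rpow_iff hR.le he.le hn).1 ?_
    calc R ^ n = s * e ^ α := hRpow
      _ ≤ e ^ (n - α) * e ^ α := by gcongr
      _ = e ^ n := by rw [← rpow_add he, sub_add_cancel]
  refine ⟨R, hR, hRe, ?_, ?_⟩
  · rw [kernelProfile, max_eq_left hdR, max_eq_right hRe, ← rpow_add hR, sub_add_cancel, hRpow]
    field_simp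
  · have hRbn : R ^ (b + n) = (s * e ^ α) ^ ((b + n) / n) := by
      rw [← rpow_mul hX.le, inv_mul_eq_div]
    rw [volumeProfile, max_eq_right hdR, max_eq_left hRe, mul_right_comm, ← rpow_add hR, hRbn,
      mul_rpow hs.le (by positivity), ← rpow_mul he.le, rpow_add he, mul_div_assoc]
    ring

lemma profiles_eq_of_le (hαn : α < n) (hde : d ≤ e) {R : ℝ} (hR : 0 < R) (heR : e ≤ R) :
    kernelProfile n σ α d e R = R ^ (n - α) ∧
      volumeProfile b θ n d e R = (R ^ (n - α)) ^ ((b + θ + n) / (n - α)) := by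
  constructor
  · rw [kernelProfile, max_eq_left (hde.trans heR), max_eq_left heR, ← rpow_add hR,
      sub_add_cancel, rpow_sub hR]
  · rw [volumeProfile, max_eq_right (hde.trans heR), max_eq_right heR, ← rpow_mul hR.le,
      mul_div_cancel₀ _ (sub_pos.2 hαn).ne', rpow_add hR, rpow_add hR]

lemma exists_profiles_eq_of_le_of_le (hαn : α < n) (he : 0 < e) (hde : d ≤ e) {s D : ℝ}
    (hD : 0 ≤ D) (hes : e ^ (n - α) ≤ s) (hsD : s ≤ D ^ (n - α)) :
    ∃ R, 0 < R ∧ R ≤ D ∧ kernelProfile n σ α d e R = s ∧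
      volumeProfile b θ n d e R = s ^ ((b + θ + n) / (n - α)) := by
  have hnα : 0 < n - α := sub_pos.2 hαn
  have hs : 0 < s := (rpow_pos_of_pos he _).trans_le hes
  set R := s ^ (n - α)⁻¹
  have hR : 0 < R := by positivity
  have hRpow : R ^ (n - α) = s := rpow_inv_rpow hs.le hnα.ne'
  have heR : e ≤ R := (rpow_le_rpow_iff he.le hR.le hnα).1 (hRpow ▸ hes)
  have hRD : R ≤ D := (rpow_le_rpow_iff hR.le hD hnα).1 (hRpow ▸ hsD)
  obtain ⟨hF, hV⟩ := profiles_eq_of_le (σ := σ) (b := b) (θ := θ) hαn hde hR heR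
  exact ⟨R, hR, hRD, hF.trans hRpow, hRpow ▸ hV⟩

end Profiles

lemma measure_singleton_eq_zero_of_le_volumeProfile {X : Type*} [PseudoMetricSpace X]
    [MeasurableSpace X] {ω : Measure X} {Ω : Set X} {x : X} {n b θ d e c D : ℝ} (hn : 0 < n)
    (hx : x ∈ Ω) (hd : 0 < d) (hde : d ≤ e) (hD : 0 < D)
    (hω : ∀ s, 0 < s → s ≤ D → ω (ball x s ∩ Ω) ≤ ENNReal.ofReal (c * volumeProfile b θ n d e s)) :
    ω {x} = 0 := by
  have hsmall : ∀ᶠ s in 𝓝[>] (0 : ℝ), ω {x} ≤ ENNReal.ofReal (c * (d ^ b * e ^ θ * s ^ n)) := by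
    filter_upwards [Ioo_mem_nhdsGT (lt_min hd hD)] with s ⟨hs, hsdD⟩
    have hsd : s ≤ d := hsdD.le.trans (min_le_left _ _)
    calc ω {x} ≤ ω (ball x s ∩ Ω) := measure_mono (singleton_subset_iff.2 ⟨mem_ball_self hs, hx⟩)
      _ ≤ _ := hω s hs (hsdD.le.trans (min_le_right _ _))
      _ = _ := by rw [volumeProfile, max_eq_left hsd, max_eq_left (hsd.trans hde)]
  have hlim :
      Tendsto (fun s : ℝ ↦ ENNReal.ofReal (c * (d ^ b * e ^ θ * s ^ n))) (𝓝[>] 0) (𝓝 0) := by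
    have h : ContinuousAt (fun s : ℝ ↦ c * (d ^ b * e ^ θ * s ^ n)) 0 :=
      continuousAt_const.mul (continuousAt_const.mul (continuousAt_id.rpow_const (Or.inr hn.le)))
    have h0 : c * (d ^ b * e ^ θ * (0 : ℝ) ^ n) = 0 := by rw [zero_rpow hn.ne', mul_zero, mul_zero]
    simpa [h0] using (ENNReal.tendsto_ofReal h.tendsto).mono_left nhdsWithin_le_nhds
  exact le_antisymm (ge_of_tendsto hlim hsmall) bot_le

noncomputable def profileScale (n σ α : ℝ) : ℝ :=
  2 ^ ((σ + |α|) / min (n - σ) (n - α))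

lemma one_le_profileScale {n σ α : ℝ} (hσ : 0 ≤ σ) (hσn : σ < n) (hαn : α < n) :
    1 ≤ profileScale n σ α :=
  one_le_rpow one_le_two
    (div_nonneg (by positivity) (le_min (sub_pos.2 hσn).le (sub_pos.2 hαn).le))

lemma profileScale_rpow {n σ α : ℝ} (hσn : σ < n) (hαn : α < n) :
    profileScale n σ α ^ min (n - σ) (n - α) = 2 ^ (σ + |α|) := by
  rw [profileScale, ← rpow_mul zero_le_two,
    div_mul_cancel₀ _ (lt_min (sub_pos.2 hσn) (sub_pos.2 hαn)).ne']

section QuasiBall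

variable {N : ℕ} {α σ b θ : ℝ} {Ω S : Set (EuclideanSpace ℝ (Fin N))}
  {x : EuclideanSpace ℝ (Fin N)} {ω : Measure (EuclideanSpace ℝ (Fin N))}

lemma inv_NKernel_comparison (hσ : 0 ≤ σ) {y : EuclideanSpace ℝ (Fin N)} (hyx : y ≠ x) :
    kernelProfile N σ α (infDist x (frontier Ω)) (infDist x S) (dist y x) ≤
        2 ^ |α| * (NKernel N α σ Ω S y x)⁻¹ ∧
      (NKernel N α σ Ω S y x)⁻¹ ≤
        2 ^ (σ + |α|) * kernelProfile N σ α (infDist x (frontier Ω)) (infDist x S) (dist y x) := by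
  have hr : 0 < dist y x := dist_pos.2 hyx
  rw [NKernel, inv_div]
  exact kernelProfile_comparison hσ hr (max_le_max_left _ (le_max_right _ _))
    (max_max_le_two_mul_max hr.le infDist_le_infDist_add_dist)
    (max_le_max_left _ (le_max_right _ _))
    (max_max_le_two_mul_max hr.le infDist_le_infDist_add_dist)

lemma ofReal_le_measure_quasiBall {c₁ D : ℝ} (hσ : 0 < σ) (hσN : σ < N) (hαN : α < N)
    (hb : 0 ≤ b) (hc₁ : 0 ≤ c₁) (hde : infDist x (frontier Ω) ≤ infDist x S) (hx : ω {x} = 0)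
    (hω : ∀ s, 0 < s → s ≤ D → ENNReal.ofReal (c₁ *
      volumeProfile b θ N (infDist x (frontier Ω)) (infDist x S) s) ≤ ω (ball x s ∩ Ω))
    {R : ℝ} (hR : 0 < R) (hRD : R ≤ D) :
    ENNReal.ofReal (c₁ / profileScale N σ α ^ (b + |θ| + N) *
        volumeProfile b θ N (infDist x (frontier Ω)) (infDist x S) R) ≤
      ω (quasiBall N α σ Ω S x (kernelProfile N σ α (infDist x (frontier Ω)) (infDist x S) R)) := by
  set F := kernelProfile N σ α (infDist x (frontier Ω)) (infDist x S)
  set V := volumeProfile b θ N (infDist x (frontier Ω)) (infDist x S)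
  set Λ := profileScale N σ α
  have hΛ : 1 ≤ Λ := one_le_profileScale hσ.le hσN hαN
  have hρ : 0 < R / Λ := by positivity
  have hsub : ball x (R / Λ) ∩ Ω ⊆ quasiBall N α σ Ω S x (F R) ∪ {x} := by
    rintro y ⟨hy, hyΩ⟩
    rcases eq_or_ne y x with rfl | hyx
    · exact Or.inr rfl
    refine Or.inl ⟨hyΩ, hyx, ?_⟩
    calc (NKernel N α σ Ω S y x)⁻¹ ≤ 2 ^ (σ + |α|) * F (dist y x) :=
          (inv_NKernel_comparison hσ.le hyx).2
      _ ≤ Λ ^ min (N - σ) (N - α) * F (R / Λ) := by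
          rw [profileScale_rpow hσN hαN]
          gcongr
          exact ((kernelProfile_strictMonoOn hσ.le hσN hαN infDist_nonneg hde).monotoneOn
            (dist_pos.2 hyx) hρ (le_of_lt (mem_ball.1 hy)))
      _ ≤ F (Λ * (R / Λ)) := rpow_min_mul_kernelProfile_le hσ.le infDist_nonneg hde hρ hΛ
      _ = F R := by rw [mul_div_cancel₀ _ (by positivity)]
  have hV : V R ≤ Λ ^ (b + |θ| + N) * V (R / Λ) :=
    volumeProfile_le_rpow_mul hb (Nat.cast_nonneg N) hρ hΛ (div_le_self hR.le hΛ)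
      (mul_div_cancel₀ _ (by positivity)).ge
  calc ENNReal.ofReal (c₁ / Λ ^ (b + |θ| + N) * V R)
      ≤ ENNReal.ofReal (c₁ * V (R / Λ)) := by
        refine ENNReal.ofReal_le_ofReal ?_
        rw [div_mul_eq_mul_div, div_le_iff₀' (by positivity), mul_left_comm]
        exact mul_le_mul_of_nonneg_left hV hc₁
    _ ≤ ω (ball x (R / Λ) ∩ Ω) := hω _ hρ ((div_le_self hR.le hΛ).trans hRD)
    _ ≤ ω (quasiBall N α σ Ω S x (F R) ∪ {x}) := measure_mono hsub
    _ ≤ ω (quasiBall N α σ Ω S x (F R)) + ω {x} := measure_union_le _ _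
    _ = ω (quasiBall N α σ Ω S x (F R)) := by rw [hx, add_zero]

lemma measure_quasiBall_le_ofReal {c₂ D : ℝ} (hσ : 0 < σ) (hσN : σ < N) (hαN : α < N)
    (hb : 0 ≤ b) (hc₂ : 0 ≤ c₂) (hde : infDist x (frontier Ω) ≤ infDist x S)
    (hΩD : ∀ y ∈ Ω, dist y x < D)
    (hω : ∀ s, 0 < s → s ≤ D → ω (ball x s ∩ Ω) ≤ ENNReal.ofReal (c₂ *
      volumeProfile b θ N (infDist x (frontier Ω)) (infDist x S) s))
    {R : ℝ} (hR : 0 < R) (hRD : R ≤ D) :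
    ω (quasiBall N α σ Ω S x (kernelProfile N σ α (infDist x (frontier Ω)) (infDist x S) R)) ≤
      ENNReal.ofReal (c₂ * (2 * profileScale N σ α) ^ (b + |θ| + N) *
        volumeProfile b θ N (infDist x (frontier Ω)) (infDist x S) R) := by
  set F := kernelProfile N σ α (infDist x (frontier Ω)) (infDist x S)
  set V := volumeProfile b θ N (infDist x (frontier Ω)) (infDist x S)
  set Λ := profileScale N σ α
  have hΛ : 1 ≤ Λ := one_le_profileScale hσ.le hσN hαN
  have hF := kernelProfile_strictMonoOn hσ.le hσN hαN infDist_nonneg hde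
  set ρ := min (2 * Λ * R) D
  have hRρ : R ≤ ρ := le_min (by nlinarith) hRD
  have hsub : quasiBall N α σ Ω S x (F R) ⊆ ball x ρ ∩ Ω := by
    rintro y ⟨hyΩ, hyx, hy⟩
    have hr : 0 < dist y x := dist_pos.2 hyx
    have hFy : F (dist y x) ≤ F (Λ * R) :=
      calc F (dist y x) ≤ 2 ^ |α| * (NKernel N α σ Ω S y x)⁻¹ :=
            (inv_NKernel_comparison hσ.le hyx).1
        _ ≤ 2 ^ |α| * F R := by gcongr
        _ ≤ 2 ^ (σ + |α|) * F R := by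
            gcongr
            · exact (kernelProfile_pos hR).le
            · exact one_le_two
            · linarith
        _ = Λ ^ min (N - σ) (N - α) * F R := by rw [profileScale_rpow hσN hαN]
        _ ≤ F (Λ * R) := rpow_min_mul_kernelProfile_le hσ.le infDist_nonneg hde hR hΛ
    have hyR : dist y x ≤ Λ * R := (hF.le_iff_le hr (mul_pos (zero_lt_one.trans_le hΛ) hR)).1 hFy
    exact ⟨mem_ball.2 (lt_min (by nlinarith) (hΩD y hyΩ)), hyΩ⟩
  calc ω (quasiBall N α σ Ω S x (F R)) ≤ ω (ball x ρ ∩ Ω) := measure_mono hsub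
    _ ≤ ENNReal.ofReal (c₂ * V ρ) := hω ρ (hR.trans_le hRρ) (min_le_right _ _)
    _ ≤ ENNReal.ofReal (c₂ * (2 * Λ) ^ (b + |θ| + N) * V R) := by
        refine ENNReal.ofReal_le_ofReal ?_
        rw [mul_assoc]
        exact mul_le_mul_of_nonneg_left (volumeProfile_le_rpow_mul hb (Nat.cast_nonneg N) hR
          (by linarith) hRρ (min_le_left _ _)) hc₂

lemma measure_quasiBall_kernelProfile_bounds {c₁ c₂ D : ℝ} (hσ : 0 < σ) (hσN : σ < N)
    (hαN : α < N) (hb : 0 ≤ b) (hc₁ : 0 ≤ c₁) (hc₂ : 0 ≤ c₂)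
    (hde : infDist x (frontier Ω) ≤ infDist x S) (hx : ω {x} = 0)
    (hΩD : ∀ y ∈ Ω, dist y x < D)
    (hω : ∀ s, 0 < s → s ≤ D →
      ENNReal.ofReal (c₁ * volumeProfile b θ N (infDist x (frontier Ω)) (infDist x S) s) ≤
          ω (ball x s ∩ Ω) ∧
        ω (ball x s ∩ Ω) ≤
          ENNReal.ofReal (c₂ * volumeProfile b θ N (infDist x (frontier Ω)) (infDist x S) s))
    {R : ℝ} (hR : 0 < R) (hRD : R ≤ D) :
    ENNReal.ofReal (c₁ / profileScale N σ α ^ (b + |θ| + N) *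
        volumeProfile b θ N (infDist x (frontier Ω)) (infDist x S) R) ≤
      ω (quasiBall N α σ Ω S x (kernelProfile N σ α (infDist x (frontier Ω)) (infDist x S) R)) ∧
    ω (quasiBall N α σ Ω S x (kernelProfile N σ α (infDist x (frontier Ω)) (infDist x S) R)) ≤
      ENNReal.ofReal (c₂ * (2 * profileScale N σ α) ^ (b + |θ| + N) *
        volumeProfile b θ N (infDist x (frontier Ω)) (infDist x S) R) :=
  ⟨ofReal_le_measure_quasiBall hσ hσN hαN hb hc₁ hde hx (fun s h h' ↦ (hω s h h').1) hR hRD,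
    measure_quasiBall_le_ofReal hσ hσN hαN hb hc₂ hde hΩD (fun s h h' ↦ (hω s h h').2) hR hRD⟩

lemma measure_quasiBall_bounds_of_kernelProfile_le {c₁ c₂ D : ℝ} (hσ : 0 < σ) (hσN : σ < N)
    (hαN : α < N) (hb : 0 ≤ b) (hc₁ : 0 ≤ c₁) (hc₂ : 0 ≤ c₂)
    (hde : infDist x (frontier Ω) ≤ infDist x S) (hx : ω {x} = 0)
    (hΩD : ∀ y ∈ Ω, dist y x < D)
    (hω : ∀ s, 0 < s → s ≤ D →
      ENNReal.ofReal (c₁ * volumeProfile b θ N (infDist x (frontier Ω)) (infDist x S) s) ≤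
          ω (ball x s ∩ Ω) ∧
        ω (ball x s ∩ Ω) ≤
          ENNReal.ofReal (c₂ * volumeProfile b θ N (infDist x (frontier Ω)) (infDist x S) s))
    (hD : 0 < D) {s : ℝ} (hs : kernelProfile N σ α (infDist x (frontier Ω)) (infDist x S) D ≤ s) :
    ENNReal.ofReal (c₁ / profileScale N σ α ^ (b + |θ| + N) *
        volumeProfile b θ N (infDist x (frontier Ω)) (infDist x S) D) ≤
      ω (quasiBall N α σ Ω S x s) ∧
    ω (quasiBall N α σ Ω S x s) ≤
      ENNReal.ofReal (c₂ * (2 * profileScale N σ α) ^ (b + |θ| + N) *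
        volumeProfile b θ N (infDist x (frontier Ω)) (infDist x S) D) := by
  have hV : 0 ≤ volumeProfile b θ N (infDist x (frontier Ω)) (infDist x S) D := by
    have : 0 < max (infDist x (frontier Ω)) D := lt_max_of_lt_right hD
    have : 0 < max (infDist x S) D := lt_max_of_lt_right hD
    unfold volumeProfile
    positivity
  have hΛ := one_le_profileScale hσ.le hσN hαN
  constructor
  · exact (measure_quasiBall_kernelProfile_bounds hσ hσN hαN hb hc₁ hc₂ hde hx hΩD hω hD
      le_rfl).1.trans (measure_mono fun y ⟨hyΩ, hyx, hy⟩ ↦ ⟨hyΩ, hyx, hy.trans hs⟩)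
  · calc ω (quasiBall N α σ Ω S x s) ≤ ω (ball x D ∩ Ω) :=
          measure_mono fun y hy ↦ ⟨mem_ball.2 (hΩD y hy.1), hy.1⟩
      _ ≤ _ := (hω D hD le_rfl).2
      _ ≤ _ := ENNReal.ofReal_le_ofReal (mul_le_mul_of_nonneg_right
          (le_mul_of_one_le_right hc₂ (one_le_rpow (by linarith) (by positivity))) hV)

end QuasiBall

lemma infDist_frontier_pos {X : Type*} [PseudoMetricSpace X] {Ω : Set X} {x : X}
    (hΩ : IsOpen Ω) (hne : (frontier Ω).Nonempty) (hx : x ∈ Ω) : 0 < infDist x (frontier Ω) :=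
  (isClosed_frontier.notMem_iff_infDist_pos hne).1 fun h ↦ (hΩ.frontier_eq ▸ h).2 hx

lemma infDist_le_diam_of_subset_frontier {X : Type*} [PseudoMetricSpace X] {Ω S : Set X}
    {x : X} (hΩ : Bornology.IsBounded Ω) (hS : S ⊆ frontier Ω) (hSne : S.Nonempty)
    (hx : x ∈ Ω) : infDist x S ≤ diam Ω := by
  obtain ⟨p, hp⟩ := hSne
  rw [← diam_closure]
  exact (infDist_le_dist_of_mem hp).trans (dist_le_diam_of_mem hΩ.closure (subset_closure hx)
    (frontier_subset_closure (hS hp)))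

theorem stmt_8_general {N : ℕ} (Ω S : Set (EuclideanSpace ℝ (Fin N)))
    (hΩo : IsOpen Ω) (hΩb : Bornology.IsBounded Ω)
    (hS : S ⊆ frontier Ω) (hSne : S.Nonempty)
    (α σ b θ : ℝ) (hα : α < N) (hσ0 : 0 < σ) (hσN : σ < N) (hb : 0 < b)
    (ω : Measure (EuclideanSpace ℝ (Fin N)))
    (c₁ c₂ : ℝ) (hc₁ : 0 < c₁) (hc₂ : 0 < c₂)
    (hω : ∀ x ∈ Ω, ∀ s : ℝ, 0 < s → s ≤ 4 * diam Ω →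
      ENNReal.ofReal (c₁ * ((max (infDist x (frontier Ω)) s) ^ b *
          (max (infDist x S) s) ^ θ * s ^ (N : ℝ))) ≤ ω (ball x s ∩ Ω) ∧
      ω (ball x s ∩ Ω) ≤ ENNReal.ofReal (c₂ * ((max (infDist x (frontier Ω)) s) ^ b *
          (max (infDist x S) s) ^ θ * s ^ (N : ℝ)))) :
    ∃ C' > 0, ∃ C'' > 0, ∀ x ∈ Ω, ∀ s : ℝ, 0 < s →
      ((s ≤ infDist x (frontier Ω) ^ (N : ℝ) * infDist x S ^ (-α) →
        ENNReal.ofReal (C' * (infDist x (frontier Ω) ^ (b - σ * N / ((N : ℝ) - σ)) *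
            infDist x S ^ (θ + α * N / ((N : ℝ) - σ)) * s ^ ((N : ℝ) / ((N : ℝ) - σ)))) ≤
          ω (quasiBall N α σ Ω S x s) ∧
        ω (quasiBall N α σ Ω S x s) ≤
          ENNReal.ofReal (C'' * (infDist x (frontier Ω) ^ (b - σ * N / ((N : ℝ) - σ)) *
            infDist x S ^ (θ + α * N / ((N : ℝ) - σ)) * s ^ ((N : ℝ) / ((N : ℝ) - σ))))) ∧
      (infDist x (frontier Ω) ^ (N : ℝ) * infDist x S ^ (-α) < s →
          s ≤ infDist x S ^ ((N : ℝ) - α) →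
        ENNReal.ofReal (C' * (s ^ ((b + N) / N) *
            infDist x S ^ (θ + α * (b + N) / N))) ≤ ω (quasiBall N α σ Ω S x s) ∧
        ω (quasiBall N α σ Ω S x s) ≤ ENNReal.ofReal (C'' * (s ^ ((b + N) / N) *
            infDist x S ^ (θ + α * (b + N) / N)))) ∧
      (infDist x S ^ ((N : ℝ) - α) ≤ s → s ≤ (4 * diam Ω) ^ ((N : ℝ) - α) →
        ENNReal.ofReal (C' * s ^ ((b + θ + N) / ((N : ℝ) - α))) ≤
          ω (quasiBall N α σ Ω S x s) ∧
        ω (quasiBall N α σ Ω S x s) ≤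
          ENNReal.ofReal (C'' * s ^ ((b + θ + N) / ((N : ℝ) - α)))) ∧
      ((4 * diam Ω) ^ ((N : ℝ) - α) ≤ s →
        ENNReal.ofReal (C' * ((4 * diam Ω) ^ ((N : ℝ) - α)) ^ ((b + θ + N) / ((N : ℝ) - α))) ≤
          ω (quasiBall N α σ Ω S x s) ∧
        ω (quasiBall N α σ Ω S x s) ≤
          ENNReal.ofReal (C'' * ((4 * diam Ω) ^ ((N : ℝ) - α)) ^ ((b + θ + N) / ((N : ℝ) - α))))) := by
  have hN : (0 : ℝ) < N := hσ0.trans hσN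
  have hΛ := one_le_profileScale hσ0.le hσN hα
  refine ⟨c₁ / profileScale N σ α ^ (b + |θ| + N), div_pos hc₁ (by positivity),
    c₂ * (2 * profileScale N σ α) ^ (b + |θ| + N), mul_pos hc₂ (by positivity),
    fun x hx s hs ↦ ?_⟩
  have hd := infDist_frontier_pos hΩo (hSne.mono hS) hx
  have hde : infDist x (frontier Ω) ≤ infDist x S := infDist_le_infDist_of_subset hS hSne
  have heD := infDist_le_diam_of_subset_frontier hΩb hS hSne hx
  have hD : 0 < 4 * diam Ω := by linarith
  have hΩD : ∀ y ∈ Ω, dist y x < 4 * diam Ω := fun y hy ↦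
    (dist_le_diam_of_mem hΩb hy hx).trans_lt (by linarith)
  have hx₀ : ω {x} = 0 := measure_singleton_eq_zero_of_le_volumeProfile hN hx hd hde hD
    fun s h h' ↦ (hω x hx s h h').2
  have key := fun R (hR : 0 < R) (hRD : R ≤ 4 * diam Ω) ↦ measure_quasiBall_kernelProfile_bounds
    hσ0 hσN hα hb.le hc₁.le hc₂.le hde hx₀ hΩD (hω x hx) hR hRD
  refine ⟨fun hs₁ ↦ ?_, fun hs₁ hs₂ ↦ ?_, fun hs₁ hs₂ ↦ ?_, fun hs₁ ↦ ?_⟩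
  · obtain ⟨R, hR, hRd, rfl, hV⟩ := exists_profiles_eq_of_le (b := b) (θ := θ) hσN hd hde hs hs₁
    exact hV ▸ key R hR (by linarith)
  · obtain ⟨R, hR, hRe, rfl, hV⟩ :=
      exists_profiles_eq_of_lt_of_le (σ := σ) (b := b) (θ := θ) hN hd hde hs₁ hs₂
    exact hV ▸ key R hR (by linarith)
  · obtain ⟨R, hR, hRD, rfl, hV⟩ := exists_profiles_eq_of_le_of_le (σ := σ) (b := b) (θ := θ)
      hα (hd.trans_le hde) hde hD.le hs₁ hs₂
    exact hV ▸ key R hR hRD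
  · obtain ⟨hF, hV⟩ := profiles_eq_of_le (σ := σ) (b := b) (θ := θ) hα hde hD (by linarith)
    exact hV ▸ measure_quasiBall_bounds_of_kernelProfile_le hσ0 hσN hα hb.le hc₁.le hc₂.le hde
      hx₀ hΩD (hω x hx) hD (hF ▸ hs₁)

/-- Two-sided estimates for the `ω`-measure of quasi-balls, where
`ω(B(x,s) ∩ Ω) ≈ max{d(x),s}^b · max{d_Σ(x),s}^θ · s^N`. -/
theorem stmt_8 {N : ℕ} (hN : 3 ≤ N) (Ω S : Set (EuclideanSpace ℝ (Fin N)))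
    (hΩo : IsOpen Ω) (hΩb : Bornology.IsBounded Ω)
    (hS : S ⊆ frontier Ω) (hSne : S.Nonempty) (hSc : IsCompact S)
    (α σ b θ : ℝ) (hα : α < N) (hσ0 : 0 < σ) (hσN : σ < N) (hb : 0 < b)
    (ω : Measure (EuclideanSpace ℝ (Fin N)))
    (c₁ c₂ : ℝ) (hc₁ : 0 < c₁) (hc₂ : 0 < c₂)
    (hω : ∀ x ∈ Ω, ∀ s : ℝ, 0 < s → s ≤ 4 * diam Ω →
      ENNReal.ofReal (c₁ * ((max (infDist x (frontier Ω)) s) ^ b *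
          (max (infDist x S) s) ^ θ * s ^ (N : ℝ))) ≤ ω (ball x s ∩ Ω) ∧
      ω (ball x s ∩ Ω) ≤ ENNReal.ofReal (c₂ * ((max (infDist x (frontier Ω)) s) ^ b *
          (max (infDist x S) s) ^ θ * s ^ (N : ℝ)))) :
    ∃ C' > 0, ∃ C'' > 0, ∀ x ∈ Ω, ∀ s : ℝ, 0 < s →
      ((s ≤ infDist x (frontier Ω) ^ (N : ℝ) * infDist x S ^ (-α) →
        ENNReal.ofReal (C' * (infDist x (frontier Ω) ^ (b - σ * N / ((N : ℝ) - σ)) *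
            infDist x S ^ (θ + α * N / ((N : ℝ) - σ)) * s ^ ((N : ℝ) / ((N : ℝ) - σ)))) ≤
          ω (quasiBall N α σ Ω S x s) ∧
        ω (quasiBall N α σ Ω S x s) ≤
          ENNReal.ofReal (C'' * (infDist x (frontier Ω) ^ (b - σ * N / ((N : ℝ) - σ)) *
            infDist x S ^ (θ + α * N / ((N : ℝ) - σ)) * s ^ ((N : ℝ) / ((N : ℝ) - σ))))) ∧
      (infDist x (frontier Ω) ^ (N : ℝ) * infDist x S ^ (-α) < s →
          s ≤ infDist x S ^ ((N : ℝ) - α) →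
        ENNReal.ofReal (C' * (s ^ ((b + N) / N) *
            infDist x S ^ (θ + α * (b + N) / N))) ≤ ω (quasiBall N α σ Ω S x s) ∧
        ω (quasiBall N α σ Ω S x s) ≤ ENNReal.ofReal (C'' * (s ^ ((b + N) / N) *
            infDist x S ^ (θ + α * (b + N) / N)))) ∧
      (infDist x S ^ ((N : ℝ) - α) ≤ s → s ≤ (4 * diam Ω) ^ ((N : ℝ) - α) →
        ENNReal.ofReal (C' * s ^ ((b + θ + N) / ((N : ℝ) - α))) ≤
          ω (quasiBall N α σ Ω S x s) ∧
        ω (quasiBall N α σ Ω S x s) ≤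
          ENNReal.ofReal (C'' * s ^ ((b + θ + N) / ((N : ℝ) - α)))) ∧
      ((4 * diam Ω) ^ ((N : ℝ) - α) ≤ s →
        ENNReal.ofReal (C' * ((4 * diam Ω) ^ ((N : ℝ) - α)) ^ ((b + θ + N) / ((N : ℝ) - α))) ≤
          ω (quasiBall N α σ Ω S x s) ∧
        ω (quasiBall N α σ Ω S x s) ≤
          ENNReal.ofReal (C'' * ((4 * diam Ω) ^ ((N : ℝ) - α)) ^ ((b + θ + N) / ((N : ℝ) - α))))) :=
  stmt_8_general Ω S hΩo hΩb hS hSne α σ b θ hα hσ0 hσN hb ω c₁ c₂ hc₁ hc₂ hω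
end

section
/- Let α < N, 0 < σ < N, b > 0 and θ ∈ ℝ with b + θ + α > 0. Let ω be a Borel measure on Ω for which there exist c₁, c₂ > 0 with c₁ · max{d(x), s}^b · max{d_Σ(x), s}^θ · s^N ≤ ω(B(x,s) ∩ Ω) ≤ c₂ · max{d(x), s}^b · max{d_Σ(x), s}^θ · s^N for all x ∈ Ω and 0 < s ≤ 4 diam(Ω). Then there exists a constant C > 0 such that for every x ∈ Ω and every r > 0, ∫₀^{2r} ω(𝔅(x,t)) t^{−2} dt ≤ C ∫₀^{r} ω(𝔅(x,t)) t^{−2} dt. -/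
/-!
For fixed `x`, the inverse kernel `𝒩(y, x)⁻¹` is comparable, up to the factor `2 ^ (|σ| + |α|)`,
to the radial profile `G(s) = s ^ (N - σ) * max s d(x) ^ σ * max s d_Σ(x) ^ (-α)` at
`s = |y - x|`, and `G` grows at least like `s ^ (N - max σ α)`. Hence every quasi-ball `𝔅(x, t)`
is squeezed between balls `B(x, R)` and `B(x, Λ R)` with `Λ` independent of `x` and `t`. The
two-sided volume bounds make `ω(B(x, ·) ∩ Ω)` doubling, and `x` itself is an `ω`-null point, so
`ω(𝔅(x, 2t)) ≤ C ω(𝔅(x, t))`. The substitution `t = 2u` in `∫₀^{2r} ω(𝔅(x, t)) t⁻² dt` then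
gives the claim with constant `C / 2`.
-/

open MeasureTheory Set Metric

open Filter Topology Real

namespace Real

theorem rpow_le_rpow_max_zero {μ L e : ℝ} (hμ : 1 ≤ μ) (hμL : μ ≤ L) : μ ^ e ≤ L ^ max e 0 := by
  rcases le_total 0 e with he | he
  · rw [max_eq_left he]
    exact rpow_le_rpow (by linarith) hμL he
  · rw [max_eq_right he, rpow_zero]
    exact rpow_le_one_of_one_le_of_nonpos hμ he

theorem rpow_min_zero_le_rpow {ν L e : ℝ} (hν : 1 ≤ ν) (hνL : ν ≤ L) : L ^ min e 0 ≤ ν ^ e := by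
  rcases le_total 0 e with he | he
  · rw [min_eq_right he, rpow_zero]
    exact one_le_rpow hν he
  · rw [min_eq_left he]
    exact rpow_le_rpow_of_nonpos (by linarith) hνL he

theorem rpow_le_two_rpow_abs {w e : ℝ} (hw : 1 ≤ w) (hw2 : w ≤ 2) : w ^ e ≤ 2 ^ |e| :=
  (rpow_le_rpow_max_zero hw hw2).trans
    (rpow_le_rpow_of_exponent_le one_le_two (max_le (le_abs_self e) (abs_nonneg e)))

theorem rpow_le_two_rpow_abs_mul {u v e : ℝ} (hu : 0 < u) (huv : u ≤ v) (hv : v ≤ 2 * u) :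
    v ^ e ≤ 2 ^ |e| * u ^ e ∧ u ^ e ≤ 2 ^ |e| * v ^ e := by
  have hw : 1 ≤ v / u := (one_le_div hu).2 huv
  have hw2 : v / u ≤ 2 := (div_le_iff₀ hu).2 hv
  have hv0 : 0 < v := hu.trans_le huv
  constructor
  · calc v ^ e = (v / u) ^ e * u ^ e := by
          rw [← mul_rpow (by positivity) hu.le, div_mul_cancel₀ _ hu.ne']
      _ ≤ 2 ^ |e| * u ^ e := by gcongr; exact rpow_le_two_rpow_abs hw hw2
  · calc u ^ e = (v / u) ^ (-e) * v ^ e := by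
          rw [div_rpow hv0.le hu.le, rpow_neg hv0.le, rpow_neg hu.le]; field_simp
      _ ≤ 2 ^ |e| * v ^ e := by
          gcongr; simpa only [abs_neg] using rpow_le_two_rpow_abs (e := -e) hw hw2

theorem rpow_le_rpow_mul_rpow_mul_rpow {L μ ν q e₀ e₁ e₂ : ℝ} (hν : 1 ≤ ν) (hνμ : ν ≤ μ)
    (hμL : μ ≤ L) (he₁ : 0 ≤ e₁) (hq₀ : q ≤ e₀) (hq : q ≤ e₀ + e₁ + e₂) :
    L ^ q ≤ L ^ e₀ * μ ^ e₁ * ν ^ e₂ := by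
  have hL : 1 ≤ L := hν.trans (hνμ.trans hμL)
  calc L ^ q ≤ L ^ (e₀ + min (e₁ + e₂) 0) :=
        rpow_le_rpow_of_exponent_le hL (by rcases min_cases (e₁ + e₂) 0 with h | h <;> linarith)
    _ = L ^ e₀ * L ^ min (e₁ + e₂) 0 := rpow_add (by linarith) _ _
    _ ≤ L ^ e₀ * ν ^ (e₁ + e₂) := by gcongr; exact rpow_min_zero_le_rpow hν (hνμ.trans hμL)
    _ = L ^ e₀ * ν ^ e₁ * ν ^ e₂ := by rw [rpow_add (by linarith), mul_assoc]
    _ ≤ L ^ e₀ * μ ^ e₁ * ν ^ e₂ := by gcongr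

theorem rpow_mul_rpow_mul_rpow_le {L μ ν e₀ e₁ e₂ : ℝ} (hμ : 1 ≤ μ) (hμL : μ ≤ L) (hν : 1 ≤ ν)
    (hνL : ν ≤ L) : L ^ e₀ * μ ^ e₁ * ν ^ e₂ ≤ L ^ (e₀ + max e₁ 0 + max e₂ 0) := by
  have hL : 0 < L := by linarith
  rw [rpow_add hL, rpow_add hL]
  gcongr
  · exact rpow_le_rpow_max_zero hμ hμL
  · exact rpow_le_rpow_max_zero hν hνL

end Real

theorem max_max_le_two_mul_max_s9 {ρ a b : ℝ} (hρ : 0 ≤ ρ) (ha : a ≤ b + ρ) :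
    max ρ (max a b) ≤ 2 * max ρ b := by
  simp only [max_le_iff]
  refine ⟨?_, ?_, ?_⟩ <;> linarith [le_max_left ρ b, le_max_right ρ b]

section

variable {s L : ℝ}

theorem one_le_max_mul_div_max (c : ℝ) (hs : 0 < s) (hL : 1 ≤ L) :
    1 ≤ max (L * s) c / max s c :=
  (one_le_div (hs.trans_le (le_max_left _ _))).2
    (max_le_max (le_mul_of_one_le_left hs.le hL) le_rfl)

theorem max_mul_div_max_le (c : ℝ) (hs : 0 < s) (hL : 1 ≤ L) : max (L * s) c / max s c ≤ L := by
  have hm : 0 < max s c := hs.trans_le (le_max_left _ _)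
  rw [div_le_iff₀ hm]
  refine max_le (by gcongr; exact le_max_left _ _) ?_
  exact (le_max_right s c).trans (le_mul_of_one_le_left hm.le hL)

theorem max_mul_div_max_anti {d D : ℝ} (hdD : d ≤ D) (hs : 0 < s) (hL : 1 ≤ L) :
    max (L * s) D / max s D ≤ max (L * s) d / max s d := by
  have hs' : s ≤ L * s := le_mul_of_one_le_left hs.le hL
  rw [div_le_div_iff₀ (hs.trans_le (le_max_left _ _)) (hs.trans_le (le_max_left _ _))]
  rcases le_or_gt D (L * s) with h | h
  · rw [max_eq_left h, max_eq_left (hdD.trans h)]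
    gcongr
  · rw [max_eq_right h.le, max_eq_right (hs'.trans h.le)]
    nlinarith [max_le_max hs' (le_refl d), le_max_left s d]

end

def LowerScaling (G : ℝ → ℝ) (q : ℝ) : Prop :=
  ∀ s > 0, ∀ L ≥ 1, L ^ q * G s ≤ G (L * s)

namespace LowerScaling

variable {G : ℝ → ℝ} {q : ℝ}

theorem monotoneOn (h : LowerScaling G q) (hq : 0 ≤ q) (hG : ∀ s > 0, 0 ≤ G s) :
    MonotoneOn G (Ioi 0) := by
  intro s (hs : 0 < s) s' _ hss'
  have hL : 1 ≤ s' / s := (one_le_div hs).2 hss'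
  calc G s ≤ (s' / s) ^ q * G s := le_mul_of_one_le_left (hG s hs) (one_le_rpow hL hq)
    _ ≤ G (s' / s * s) := h s hs _ hL
    _ = G s' := by rw [div_mul_cancel₀ _ hs.ne']

theorem le_rpow_mul (h : LowerScaling G q) {s : ℝ} (hs : 0 < s) (hs1 : s ≤ 1) :
    G s ≤ s ^ q * G 1 := by
  have := h s hs s⁻¹ (one_le_inv₀ hs |>.2 hs1)
  rw [inv_mul_cancel₀ hs.ne', inv_rpow hs.le] at this
  have hsq : 0 < s ^ q := rpow_pos_of_pos hs q
  calc G s = s ^ q * ((s ^ q)⁻¹ * G s) := by field_simp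
    _ ≤ s ^ q * G 1 := by gcongr

theorem tendsto_nhdsGT_zero (h : LowerScaling G q) (hq : 0 < q) (hG : ∀ s > 0, 0 ≤ G s) :
    Tendsto G (𝓝[>] 0) (𝓝 0) := by
  have hlim : Tendsto (fun s : ℝ => s ^ q * G 1) (𝓝[>] 0) (𝓝 0) := by
    have := ((continuousAt_rpow_const 0 q (Or.inr hq.le)).tendsto.mul_const (G 1)).mono_left
      (nhdsWithin_le_nhds (s := Ioi 0))
    rwa [zero_rpow hq.ne', zero_mul] at this
  refine tendsto_of_tendsto_of_tendsto_of_le_of_le' tendsto_const_nhds hlim ?_ ?_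
  · filter_upwards [self_mem_nhdsWithin] with s hs using hG s hs
  · filter_upwards [Ioo_mem_nhdsGT one_pos] with s hs using h.le_rpow_mul hs.1 hs.2.le

/-- The radius `R` is the supremum of the sublevel set `{G ≤ a}`; since `G` grows at least like
`s ^ q`, the larger sublevel set `{G ≤ L ^ q * a}` stays within `L * R`. -/
theorem exists_sublevel_radius (h : LowerScaling G q) (hq : 0 < q) (hG : ∀ s > 0, 0 < G s) {a L : ℝ}
    (ha : 0 < a) (hL : 1 ≤ L) :
    ∃ R > 0, (∀ s, 0 < s → s < R → G s ≤ a) ∧ ∀ s, 0 < s → G s ≤ L ^ q * a → s ≤ L * R := by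
  set E := {s | 0 < s ∧ G s ≤ a}
  obtain ⟨s₀, hs₀a, hs₀⟩ := (((h.tendsto_nhdsGT_zero hq fun s hs => (hG s hs).le).eventually
    (ge_mem_nhds ha)).and self_mem_nhdsWithin).exists
  have hbdd : BddAbove E := by
    refine ⟨max 1 ((a / G 1) ^ q⁻¹), fun s ⟨hs, hsa⟩ => ?_⟩
    rcases le_total s 1 with hs1 | hs1
    · exact hs1.trans (le_max_left _ _)
    · have hG1 := hG 1 one_pos
      have : s ^ q * G 1 ≤ a := by simpa using (h 1 one_pos s hs1).trans (by rwa [mul_one])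
      refine le_max_of_le_right ((le_rpow_inv_iff_of_pos hs.le (by positivity) hq).2 ?_)
      rwa [le_div_iff₀ hG1]
  have hs₀E : s₀ ∈ E := ⟨hs₀, hs₀a⟩
  refine ⟨sSup E, hs₀.trans_le (le_csSup hbdd hs₀E), fun s hs hsR => ?_, fun s hs hsa => ?_⟩
  · obtain ⟨s', ⟨hs'0, hs'a⟩, hss'⟩ := exists_lt_of_lt_csSup ⟨s₀, hs₀E⟩ hsR
    exact (h.monotoneOn hq.le (fun s hs => (hG s hs).le) hs hs'0 hss'.le).trans hs'a
  · by_contra! hRs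
    have hL0 : 0 < L := by linarith
    have hsL : 0 < s / L := div_pos hs hL0
    have hnot : s / L ∉ E := fun hmem =>
      (not_le.2 ((lt_div_iff₀ hL0).2 (by linarith))) (le_csSup hbdd hmem)
    have haG : a < G (s / L) := lt_of_not_ge fun hle => hnot ⟨hsL, hle⟩
    have := h (s / L) hsL L hL
    rw [mul_div_cancel₀ _ hL0.ne'] at this
    have := mul_lt_mul_of_pos_left haG (rpow_pos_of_pos hL0 q)
    linarith

end LowerScaling

/-- Both `𝒩(y, x)⁻¹` (up to a bounded factor, at `s = |y - x|`) and the volume bound of `ω` are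
of this form, with `(d, D) = (d(x), d_Σ(x))` and exponents `(N - σ, σ, -α)` and `(N, b, θ)`
respectively. -/
noncomputable def radialProfile (d D e₀ e₁ e₂ s : ℝ) : ℝ := s ^ e₀ * max s d ^ e₁ * max s D ^ e₂

namespace radialProfile

variable {d D e₀ e₁ e₂ s : ℝ}

theorem pos (hs : 0 < s) : 0 < radialProfile d D e₀ e₁ e₂ s := by
  have := hs.trans_le (le_max_left s d)
  have := hs.trans_le (le_max_left s D)
  unfold radialProfile; positivity

theorem apply_mul {L : ℝ} (hs : 0 < s) (hL : 0 < L) :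
    radialProfile d D e₀ e₁ e₂ (L * s) = L ^ e₀ * (max (L * s) d / max s d) ^ e₁ *
      (max (L * s) D / max s D) ^ e₂ * radialProfile d D e₀ e₁ e₂ s := by
  have hd := hs.trans_le (le_max_left s d)
  have hD := hs.trans_le (le_max_left s D)
  have hd' := (mul_pos hL hs).trans_le (le_max_left (L * s) d)
  have hD' := (mul_pos hL hs).trans_le (le_max_left (L * s) D)
  unfold radialProfile
  rw [div_rpow hd'.le hd.le, div_rpow hD'.le hD.le, mul_rpow hL.le hs.le]
  field_simp

theorem lowerScaling (hdD : d ≤ D) (he₁ : 0 ≤ e₁) {q : ℝ} (hq₀ : q ≤ e₀)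
    (hq : q ≤ e₀ + e₁ + e₂) : LowerScaling (radialProfile d D e₀ e₁ e₂) q := by
  intro s hs L hL
  rw [apply_mul hs (by linarith)]
  gcongr
  · exact (pos hs).le
  · exact rpow_le_rpow_mul_rpow_mul_rpow (one_le_max_mul_div_max D hs hL)
      (max_mul_div_max_anti hdD hs hL) (max_mul_div_max_le d hs hL) he₁ hq₀ hq

theorem apply_mul_le {L : ℝ} (hs : 0 < s) (hL : 1 ≤ L) :
    radialProfile d D e₀ e₁ e₂ (L * s) ≤
      L ^ (e₀ + max e₁ 0 + max e₂ 0) * radialProfile d D e₀ e₁ e₂ s := by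
  rw [apply_mul hs (by linarith)]
  gcongr
  · exact (pos hs).le
  · exact rpow_mul_rpow_mul_rpow_le (one_le_max_mul_div_max d hs hL) (max_mul_div_max_le d hs hL)
      (one_le_max_mul_div_max D hs hL) (max_mul_div_max_le D hs hL)

end radialProfile

theorem Metric.diam_pos_of_isOpen {E : Type*} [NormedAddCommGroup E] [NormedSpace ℝ E]
    [Nontrivial E] {Ω : Set E} (hΩo : IsOpen Ω) (hΩb : Bornology.IsBounded Ω) {x : E}
    (hx : x ∈ Ω) : 0 < diam Ω := by
  obtain ⟨ε, hε, hball⟩ := Metric.isOpen_iff.1 hΩo x hx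
  obtain ⟨v, hv⟩ := exists_norm_eq E (half_pos hε).le
  have hxv : x + v ∈ Ω := hball (by simpa [hv] using half_lt_self hε)
  calc 0 < ε / 2 := half_pos hε
    _ = dist (x + v) x := by simp [hv]
    _ ≤ diam Ω := dist_le_diam_of_mem hΩb hxv hx

section MeasureBounds

variable {X : Type*} [PseudoMetricSpace X] {Ω : Set X} {x : X}

theorem Metric.ball_inter_eq_ball_min_inter (hΩb : Bornology.IsBounded Ω) (hx : x ∈ Ω) {R : ℝ}
    (hR : diam Ω < R) (u : ℝ) : ball x u ∩ Ω = ball x (min u R) ∩ Ω := by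
  ext y
  simp only [mem_inter_iff, mem_ball, lt_min_iff, and_congr_left_iff, iff_self_and]
  exact fun hy _ => (dist_le_diam_of_mem hΩb hy hx).trans_lt hR

theorem MeasureTheory.measure_singleton_eq_zero_of_le [MeasurableSpace X] {ω : Measure X}
    {H : ℝ → ℝ} {c ρ : ℝ} (hH : Tendsto H (𝓝[>] 0) (𝓝 0)) (hρ : 0 < ρ) (hx : x ∈ Ω)
    (hle : ∀ s, 0 < s → s ≤ ρ → ω (ball x s ∩ Ω) ≤ ENNReal.ofReal (c * H s)) : ω {x} = 0 := by
  have hlim : Tendsto (fun s => ENNReal.ofReal (c * H s)) (𝓝[>] 0) (𝓝 0) := by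
    simpa using ENNReal.tendsto_ofReal (hH.const_mul c)
  refine le_antisymm (ge_of_tendsto hlim ?_) bot_le
  filter_upwards [Ioc_mem_nhdsGT hρ] with s hs
  have hxs : x ∈ ball x s ∩ Ω := ⟨mem_ball_self hs.1, hx⟩
  exact (measure_mono (singleton_subset_iff.2 hxs)).trans (hle s hs.1 hs.2)

/-- Beyond `2 diam Ω` the ball already contains `Ω`, so the radii can be capped to where the
bounds hold. -/
theorem MeasureTheory.measure_ball_inter_le_of_bounds [MeasurableSpace X] {ω : Measure X}
    (hΩb : Bornology.IsBounded Ω) (hD : 0 < diam Ω) (hx : x ∈ Ω) {H : ℝ → ℝ} {c₁ c₂ Λ p : ℝ}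
    (hc₁ : 0 < c₁) (hc₂ : 0 ≤ c₂) (hΛ : 1 ≤ Λ) (hHmono : MonotoneOn H (Ioi 0))
    (hHscale : ∀ s > 0, H (Λ * s) ≤ Λ ^ p * H s)
    (hbounds : ∀ s, 0 < s → s ≤ 4 * diam Ω →
      ENNReal.ofReal (c₁ * H s) ≤ ω (ball x s ∩ Ω) ∧ ω (ball x s ∩ Ω) ≤ ENNReal.ofReal (c₂ * H s))
    {u₁ u₂ : ℝ} (hu₁ : 0 < u₁) (hu : u₁ ≤ Λ * u₂) :
    ω (ball x u₁ ∩ Ω) ≤ ENNReal.ofReal (c₂ * Λ ^ p / c₁) * ω (ball x u₂ ∩ Ω) := by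
  have hu₂ : 0 < u₂ := pos_of_mul_pos_right (hu₁.trans_le hu) (by linarith)
  have hR : diam Ω < 2 * diam Ω := by linarith
  set v₁ := min u₁ (2 * diam Ω)
  set v₂ := min u₂ (2 * diam Ω)
  have hv₁ : 0 < v₁ := lt_min hu₁ (by linarith)
  have hv₂ : 0 < v₂ := lt_min hu₂ (by linarith)
  have hv : v₁ ≤ Λ * v₂ := by
    rw [mul_min_of_nonneg _ _ (by linarith : (0 : ℝ) ≤ Λ)]
    exact min_le_min hu (le_mul_of_one_le_left (by linarith) hΛ)
  have hHv : H v₁ ≤ Λ ^ p * H v₂ :=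
    (hHmono hv₁ (mul_pos (by linarith) hv₂) hv).trans (hHscale v₂ hv₂)
  rw [ball_inter_eq_ball_min_inter hΩb hx hR u₁, ball_inter_eq_ball_min_inter hΩb hx hR u₂]
  calc ω (ball x v₁ ∩ Ω) ≤ ENNReal.ofReal (c₂ * H v₁) :=
        (hbounds v₁ hv₁ ((min_le_right _ _).trans (by linarith))).2
    _ ≤ ENNReal.ofReal (c₂ * Λ ^ p / c₁ * (c₁ * H v₂)) := by
        apply ENNReal.ofReal_le_ofReal
        have : c₂ * Λ ^ p / c₁ * (c₁ * H v₂) = c₂ * (Λ ^ p * H v₂) := by field_simp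
        rw [this]
        exact mul_le_mul_of_nonneg_left hHv hc₂
    _ = ENNReal.ofReal (c₂ * Λ ^ p / c₁) * ENNReal.ofReal (c₁ * H v₂) :=
        ENNReal.ofReal_mul (by positivity)
    _ ≤ ENNReal.ofReal (c₂ * Λ ^ p / c₁) * ω (ball x v₂ ∩ Ω) := by
        gcongr; exact (hbounds v₂ hv₂ ((min_le_right _ _).trans (by linarith))).1

end MeasureBounds

theorem MeasureTheory.setLIntegral_Ioc_comp_mul_left (F : ℝ → ENNReal) {c : ℝ} (hc : 0 < c)
    (a b : ℝ) :
    ∫⁻ t in Ioc (c * a) (c * b), F t = ENNReal.ofReal c * ∫⁻ u in Ioc a b, F (c * u) := by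
  have hpre : (c * ·) ⁻¹' Ioc (c * a) (c * b) = Ioc a b := by
    ext u; simp [mul_lt_mul_iff_right₀ hc, mul_le_mul_iff_right₀ hc]
  conv_lhs => rw [← Real.smul_map_volume_mul_left hc.ne', Measure.restrict_smul,
    Measure.restrict_map (measurable_const_mul c) measurableSet_Ioc, hpre, lintegral_smul_measure]
  rw [abs_of_pos hc, smul_eq_mul]
  exact congrArg _ (lintegral_map_equiv F (MeasurableEquiv.mulLeft₀ c hc.ne'))

theorem MeasureTheory.setLIntegral_Ioc_zero_two_mul_le {f : ℝ → ENNReal} {C r : ℝ} (hC : 0 ≤ C)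
    (hf : ∀ t > 0, f (2 * t) ≤ ENNReal.ofReal C * f t) :
    ∫⁻ t in Ioc 0 (2 * r), f t * ENNReal.ofReal (t ^ (-2 : ℝ)) ≤
      ENNReal.ofReal (C / 2) * ∫⁻ t in Ioc 0 r, f t * ENNReal.ofReal (t ^ (-2 : ℝ)) := by
  conv_lhs => rw [← mul_zero (2 : ℝ), setLIntegral_Ioc_comp_mul_left _ two_pos]
  rw [← lintegral_const_mul' _ _ ENNReal.ofReal_ne_top,
    ← lintegral_const_mul' _ _ ENNReal.ofReal_ne_top]
  refine setLIntegral_mono' measurableSet_Ioc fun t (ht : t ∈ Ioc 0 r) => ?_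
  have hscale : 2 * (2 * t) ^ (-2 : ℝ) = t ^ (-2 : ℝ) / 2 := by
    rw [mul_rpow two_pos.le ht.1.le]; norm_num [rpow_neg]; ring
  calc ENNReal.ofReal 2 * (f (2 * t) * ENNReal.ofReal ((2 * t) ^ (-2 : ℝ)))
      = f (2 * t) * ENNReal.ofReal (t ^ (-2 : ℝ) / 2) := by
        rw [← hscale, ENNReal.ofReal_mul two_pos.le]; ring
    _ ≤ ENNReal.ofReal C * f t * ENNReal.ofReal (t ^ (-2 : ℝ) / 2) := by gcongr; exact hf t ht.1
    _ = ENNReal.ofReal (C / 2) * (f t * ENNReal.ofReal (t ^ (-2 : ℝ))) := by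
        rw [div_eq_mul_inv, div_eq_mul_inv, ENNReal.ofReal_mul hC,
          ENNReal.ofReal_mul (rpow_pos_of_pos ht.1 _).le]
        ring

section QuasiBall

variable {N : ℕ} {α σ : ℝ} {Ω S : Set (EuclideanSpace ℝ (Fin N))} {x : EuclideanSpace ℝ (Fin N)}

theorem inv_NKernel_le_and_le {y : EuclideanSpace ℝ (Fin N)} (hyx : y ≠ x) :
    (NKernel N α σ Ω S y x)⁻¹ ≤ 2 ^ (|σ| + |α|) *
      radialProfile (infDist x (frontier Ω)) (infDist x S) (N - σ) σ (-α) (dist y x) ∧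
    radialProfile (infDist x (frontier Ω)) (infDist x S) (N - σ) σ (-α) (dist y x) ≤
      2 ^ (|σ| + |α|) * (NKernel N α σ Ω S y x)⁻¹ := by
  set ρ := dist y x
  have hρ : 0 < ρ := dist_pos.2 hyx
  set A := max ρ (infDist x (frontier Ω))
  set A' := max ρ (max (infDist y (frontier Ω)) (infDist x (frontier Ω)))
  set B := max ρ (infDist x S)
  set B' := max ρ (max (infDist y S) (infDist x S))
  have hA : 0 < A := hρ.trans_le (le_max_left _ _)
  have hB : 0 < B := hρ.trans_le (le_max_left _ _)
  obtain ⟨hA'A, hAA'⟩ := rpow_le_two_rpow_abs_mul (e := σ) hA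
    (max_le_max le_rfl (le_max_right _ _))
    (max_max_le_two_mul_max_s9 hρ.le infDist_le_infDist_add_dist)
  obtain ⟨hB'B, hBB'⟩ := rpow_le_two_rpow_abs_mul (e := -α) hB
    (max_le_max le_rfl (le_max_right _ _))
    (max_max_le_two_mul_max_s9 hρ.le infDist_le_infDist_add_dist)
  have hker : (NKernel N α σ Ω S y x)⁻¹ = ρ ^ ((N : ℝ) - σ) * A' ^ σ * B' ^ (-α) := by
    rw [NKernel, inv_div, rpow_neg (hB.trans_le (max_le_max le_rfl (le_max_right _ _))).le,
      div_eq_mul_inv]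
  have hK : (2 : ℝ) ^ (|σ| + |α|) = 2 ^ |σ| * 2 ^ |-α| := by rw [abs_neg, rpow_add two_pos]
  rw [hker, hK]
  unfold radialProfile
  constructor
  · calc ρ ^ ((N : ℝ) - σ) * A' ^ σ * B' ^ (-α)
        ≤ ρ ^ ((N : ℝ) - σ) * (2 ^ |σ| * A ^ σ) * (2 ^ |-α| * B ^ (-α)) := by gcongr
      _ = _ := by ring
  · calc ρ ^ ((N : ℝ) - σ) * A ^ σ * B ^ (-α)
        ≤ ρ ^ ((N : ℝ) - σ) * (2 ^ |σ| * A' ^ σ) * (2 ^ |-α| * B' ^ (-α)) := by gcongr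
      _ = _ := by ring

theorem exists_quasiBall_sandwich (hS : S ⊆ frontier Ω) (hSne : S.Nonempty) (hα : α < N)
    (hσ0 : 0 ≤ σ) (hσN : σ < N) :
    ∃ Λ ≥ 1, ∀ x, ∀ t > 0, ∃ R > 0, ball x R ∩ Ω ⊆ quasiBall N α σ Ω S x t ∪ {x} ∧
      quasiBall N α σ Ω S x (2 * t) ⊆ ball x (Λ * R) ∩ Ω := by
  set K : ℝ := 2 ^ (|σ| + |α|)
  set q : ℝ := N - max σ α
  have hK : 1 ≤ K := one_le_rpow one_le_two (by positivity)
  have hq : 0 < q := sub_pos.2 (max_lt hσN hα)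
  set L := (2 * K ^ 2) ^ q⁻¹
  have hL : 1 ≤ L := one_le_rpow (by nlinarith) (inv_nonneg.2 hq.le)
  have hLq : L ^ q = 2 * K ^ 2 := rpow_inv_rpow (by positivity) hq.ne'
  refine ⟨2 * L, by linarith, fun x t ht => ?_⟩
  have hG : LowerScaling (radialProfile (infDist x (frontier Ω)) (infDist x S) (N - σ) σ (-α)) q :=
    radialProfile.lowerScaling (infDist_le_infDist_of_subset hS hSne) hσ0
      (by linarith [le_max_left σ α]) (by linarith [le_max_right σ α])
  obtain ⟨R, hR, hsmall, hlarge⟩ := hG.exists_sublevel_radius hq (fun s hs => radialProfile.pos hs)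
    (a := t / K) (div_pos ht (by linarith)) hL
  refine ⟨R, hR, fun y ⟨hyR, hyΩ⟩ => ?_, fun y ⟨hyΩ, hyx, hyt⟩ => ⟨?_, hyΩ⟩⟩
  · by_cases hyx : y = x
    · exact Or.inr hyx
    · exact Or.inl ⟨hyΩ, hyx, (inv_NKernel_le_and_le hyx).1.trans
        ((le_div_iff₀' (by linarith)).1 (hsmall _ (dist_pos.2 hyx) hyR))⟩
  · have hyL : dist y x ≤ L * R := hlarge _ (dist_pos.2 hyx) <| by
      calc _ ≤ K * (NKernel N α σ Ω S y x)⁻¹ := (inv_NKernel_le_and_le hyx).2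
        _ ≤ K * (2 * t) := by gcongr
        _ = L ^ q * (t / K) := by rw [hLq]; field_simp
    exact mem_ball.2 (hyL.trans_lt (by nlinarith))

theorem exists_measure_quasiBall_two_mul_le (hN : N ≠ 0) (hΩo : IsOpen Ω)
    (hΩb : Bornology.IsBounded Ω) (hS : S ⊆ frontier Ω) (hSne : S.Nonempty) (hα : α < N)
    (hσ0 : 0 ≤ σ) (hσN : σ < N) {b θ : ℝ} (hb : 0 ≤ b) (hbθN : 0 < b + θ + N)
    {ω : Measure (EuclideanSpace ℝ (Fin N))} {c₁ c₂ : ℝ} (hc₁ : 0 < c₁) (hc₂ : 0 < c₂)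
    (hω : ∀ x ∈ Ω, ∀ s : ℝ, 0 < s → s ≤ 4 * diam Ω →
      ENNReal.ofReal (c₁ * ((max (infDist x (frontier Ω)) s) ^ b *
          (max (infDist x S) s) ^ θ * s ^ (N : ℝ))) ≤ ω (ball x s ∩ Ω) ∧
      ω (ball x s ∩ Ω) ≤ ENNReal.ofReal (c₂ * ((max (infDist x (frontier Ω)) s) ^ b *
          (max (infDist x S) s) ^ θ * s ^ (N : ℝ)))) :
    ∃ C > 0, ∀ x ∈ Ω, ∀ t > 0,
      ω (quasiBall N α σ Ω S x (2 * t)) ≤ ENNReal.ofReal C * ω (quasiBall N α σ Ω S x t) := by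
  obtain ⟨Λ, hΛ, hsandwich⟩ := exists_quasiBall_sandwich hS hSne hα hσ0 hσN
  set p : ℝ := N + max b 0 + max θ 0
  refine ⟨c₂ * Λ ^ p / c₁, by positivity, fun x hx t ht => ?_⟩
  obtain ⟨R, hR, hsub, hsup⟩ := hsandwich x t ht
  set H := radialProfile (infDist x (frontier Ω)) (infDist x S) N b θ
  have hbounds : ∀ s, 0 < s → s ≤ 4 * diam Ω → ENNReal.ofReal (c₁ * H s) ≤ ω (ball x s ∩ Ω) ∧
      ω (ball x s ∩ Ω) ≤ ENNReal.ofReal (c₂ * H s) := by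
    intro s hs hsD
    have hH : H s =
        max (infDist x (frontier Ω)) s ^ b * max (infDist x S) s ^ θ * s ^ (N : ℝ) := by
      simp only [H, radialProfile, max_comm s]; ring
    rw [hH]; exact hω x hx s hs hsD
  have hq : 0 < min (N : ℝ) (b + θ + N) := lt_min (by positivity) hbθN
  have hH : LowerScaling H (min (N : ℝ) (b + θ + N)) :=
    radialProfile.lowerScaling (infDist_le_infDist_of_subset hS hSne) hb (min_le_left _ _)
      (by linarith [min_le_right (N : ℝ) (b + θ + N)])
  have hHnonneg : ∀ s > 0, 0 ≤ H s := fun s hs => (radialProfile.pos hs).le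
  have hD : 0 < diam Ω := by
    have : NeZero N := ⟨hN⟩
    exact diam_pos_of_isOpen hΩo hΩb hx
  have hatom : ω {x} = 0 := measure_singleton_eq_zero_of_le (hH.tendsto_nhdsGT_zero hq hHnonneg)
    (by positivity : (0 : ℝ) < 4 * diam Ω) hx fun s hs hsD => (hbounds s hs hsD).2
  calc ω (quasiBall N α σ Ω S x (2 * t)) ≤ ω (ball x (Λ * R) ∩ Ω) := measure_mono hsup
    _ ≤ ENNReal.ofReal (c₂ * Λ ^ p / c₁) * ω (ball x R ∩ Ω) :=
        measure_ball_inter_le_of_bounds hΩb hD hx hc₁ hc₂.le hΛ (hH.monotoneOn hq.le hHnonneg)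
          (fun s hs => radialProfile.apply_mul_le hs hΛ) hbounds (by positivity) le_rfl
    _ ≤ ENNReal.ofReal (c₂ * Λ ^ p / c₁) * ω (quasiBall N α σ Ω S x t ∪ {x}) := by gcongr
    _ ≤ ENNReal.ofReal (c₂ * Λ ^ p / c₁) * (ω (quasiBall N α σ Ω S x t) + ω {x}) := by
        gcongr; exact measure_union_le _ _
    _ = ENNReal.ofReal (c₂ * Λ ^ p / c₁) * ω (quasiBall N α σ Ω S x t) := by rw [hatom, add_zero]

end QuasiBall

theorem stmt_9_general {N : ℕ} (hN : 3 ≤ N) (Ω S : Set (EuclideanSpace ℝ (Fin N)))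
    (hΩo : IsOpen Ω) (hΩb : Bornology.IsBounded Ω)
    (hS : S ⊆ frontier Ω) (hSne : S.Nonempty)
    (α σ b θ : ℝ) (hα : α < N) (hσ0 : 0 < σ) (hσN : σ < N) (hb : 0 < b)
    (hbθα : 0 < b + θ + α)
    (ω : Measure (EuclideanSpace ℝ (Fin N)))
    (c₁ c₂ : ℝ) (hc₁ : 0 < c₁) (hc₂ : 0 < c₂)
    (hω : ∀ x ∈ Ω, ∀ s : ℝ, 0 < s → s ≤ 4 * diam Ω →
      ENNReal.ofReal (c₁ * ((max (infDist x (frontier Ω)) s) ^ b *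
          (max (infDist x S) s) ^ θ * s ^ (N : ℝ))) ≤ ω (ball x s ∩ Ω) ∧
      ω (ball x s ∩ Ω) ≤ ENNReal.ofReal (c₂ * ((max (infDist x (frontier Ω)) s) ^ b *
          (max (infDist x S) s) ^ θ * s ^ (N : ℝ)))) :
    ∃ C > 0, ∀ x ∈ Ω, ∀ r : ℝ, 0 < r →
      ∫⁻ t in Set.Ioc (0 : ℝ) (2 * r),
          ω (quasiBall N α σ Ω S x t) * ENNReal.ofReal (t ^ (-2 : ℝ)) ≤
      ENNReal.ofReal C * ∫⁻ t in Set.Ioc (0 : ℝ) r,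
          ω (quasiBall N α σ Ω S x t) * ENNReal.ofReal (t ^ (-2 : ℝ)) := by
  obtain ⟨C, hC, hdoubling⟩ := exists_measure_quasiBall_two_mul_le (by omega) hΩo hΩb hS hSne hα
    hσ0.le hσN hb.le (by linarith) hc₁ hc₂ hω
  exact ⟨C / 2, half_pos hC, fun x hx _ _ =>
    setLIntegral_Ioc_zero_two_mul_le hC.le (hdoubling x hx)⟩

/-- Doubling property of `∫₀^r ω(𝔅(x,t)) t^{−2} dt`. -/
theorem stmt_9 {N : ℕ} (hN : 3 ≤ N) (Ω S : Set (EuclideanSpace ℝ (Fin N)))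
    (hΩo : IsOpen Ω) (hΩb : Bornology.IsBounded Ω)
    (hS : S ⊆ frontier Ω) (hSne : S.Nonempty) (hSc : IsCompact S)
    (α σ b θ : ℝ) (hα : α < N) (hσ0 : 0 < σ) (hσN : σ < N) (hb : 0 < b)
    (hbθα : 0 < b + θ + α)
    (ω : Measure (EuclideanSpace ℝ (Fin N)))
    (c₁ c₂ : ℝ) (hc₁ : 0 < c₁) (hc₂ : 0 < c₂)
    (hω : ∀ x ∈ Ω, ∀ s : ℝ, 0 < s → s ≤ 4 * diam Ω →
      ENNReal.ofReal (c₁ * ((max (infDist x (frontier Ω)) s) ^ b *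
          (max (infDist x S) s) ^ θ * s ^ (N : ℝ))) ≤ ω (ball x s ∩ Ω) ∧
      ω (ball x s ∩ Ω) ≤ ENNReal.ofReal (c₂ * ((max (infDist x (frontier Ω)) s) ^ b *
          (max (infDist x S) s) ^ θ * s ^ (N : ℝ)))) :
    ∃ C > 0, ∀ x ∈ Ω, ∀ r : ℝ, 0 < r →
      ∫⁻ t in Set.Ioc (0 : ℝ) (2 * r),
          ω (quasiBall N α σ Ω S x t) * ENNReal.ofReal (t ^ (-2 : ℝ)) ≤
      ENNReal.ofReal C * ∫⁻ t in Set.Ioc (0 : ℝ) r,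
          ω (quasiBall N α σ Ω S x t) * ENNReal.ofReal (t ^ (-2 : ℝ)) :=
  stmt_9_general hN Ω S hΩo hΩb hS hSne α σ b θ hα hσ0 hσN hb hbθα ω c₁ c₂ hc₁ hc₂ hω
end

section
/- Let k ≥ 1 be an integer, η > 0, s > 1 and R > 0. Then there exists a constant C = C(s, η) > 0 (independent of R) such that for every nonnegative finite Borel measure ν on ℝ^k and every x ∈ ℝ^k, ∫₀^{4R} ( ν(B(x,r)) r^{−η} )^{s} dr/r ≤ C ( ∫₀^{8R} ν(B(x,r)) r^{−η} dr/r )^{s}. -/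
/-!
For `r ≤ 4R`, monotonicity of `t ↦ ν (B(x,t))` on the dyadic shell `(r, 2r]` bounds
`ν (B(x,r)) r^(-η)` by `2^(η+1)` times the linear potential `I` over `(0, 8R]`. Hence in the
`s`-power integral we may trade `s - 1` factors for `(2^(η+1) I)^(s-1)`, and what remains
is again at most `I`.
-/

open MeasureTheory Set Metric
open scoped ENNReal

namespace ENNReal

theorem rpow_sub_one_mul_self (a : ℝ≥0∞) {s : ℝ} (hs : 1 ≤ s) :
    a ^ (s - 1) * a = a ^ s := by
  conv_rhs => rw [← sub_add_cancel s 1]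
  rw [rpow_add_of_nonneg _ _ (sub_nonneg.2 hs) zero_le_one, rpow_one]

theorem rpow_le_rpow_sub_one_mul {a M : ℝ≥0∞} {s : ℝ} (ha : a ≤ M) (hs : 1 ≤ s) :
    a ^ s ≤ M ^ (s - 1) * a := by
  rw [← rpow_sub_one_mul_self a hs]
  exact mul_le_mul_left (rpow_le_rpow ha (sub_nonneg.2 hs)) a

end ENNReal

theorem MeasureTheory.setLIntegral_rpow_mul_le {α : Type*} [MeasurableSpace α]
    {μ : Measure α} {S : Set α} (hS : MeasurableSet S) {f w : α → ℝ≥0∞} {M : ℝ≥0∞} {s : ℝ}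
    (hM : M ≠ ∞) (hs : 1 ≤ s) (hf : ∀ x ∈ S, f x ≤ M) :
    ∫⁻ x in S, f x ^ s * w x ∂μ ≤ M ^ (s - 1) * ∫⁻ x in S, f x * w x ∂μ := by
  rw [← lintegral_const_mul' _ _ (ENNReal.rpow_ne_top_of_nonneg (sub_nonneg.2 hs) hM)]
  refine setLIntegral_mono' hS fun x hx => ?_
  rw [← mul_assoc]
  exact mul_le_mul_left (ENNReal.rpow_le_rpow_sub_one_mul (hf x hx) hs) _

theorem Monotone.mul_rpow_neg_le_setLIntegral_Ioc {g : ℝ → ℝ≥0∞} (hg : Monotone g)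
    {η r : ℝ} (hη : 0 ≤ η) (hr : 0 < r) :
    g r * ENNReal.ofReal (r ^ (-η)) ≤ ENNReal.ofReal (2 ^ (η + 1)) *
      ∫⁻ t in Ioc r (2 * r), g t * ENNReal.ofReal (t ^ (-η)) * ENNReal.ofReal t⁻¹ := by
  have hweight : r ^ (-η) = 2 ^ (η + 1) * ((2 * r) ^ (-η) * (2 * r)⁻¹ * r) := by
    rw [Real.mul_rpow zero_le_two hr.le, Real.rpow_neg zero_le_two, Real.rpow_add_one two_ne_zero]
    field_simp
  have hshell : g r * ENNReal.ofReal ((2 * r) ^ (-η) * (2 * r)⁻¹ * r) ≤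
      ∫⁻ t in Ioc r (2 * r), g t * ENNReal.ofReal (t ^ (-η)) * ENNReal.ofReal t⁻¹ := by
    calc g r * ENNReal.ofReal ((2 * r) ^ (-η) * (2 * r)⁻¹ * r)
        = ∫⁻ _ in Ioc r (2 * r),
            g r * ENNReal.ofReal ((2 * r) ^ (-η)) * ENNReal.ofReal (2 * r)⁻¹ := by
          rw [setLIntegral_const, Real.volume_Ioc, show 2 * r - r = r by ring,
            ENNReal.ofReal_mul (by positivity), ENNReal.ofReal_mul (by positivity), mul_assoc,
            mul_assoc, mul_assoc]
      _ ≤ _ := setLIntegral_mono' measurableSet_Ioc fun t ⟨hrt, ht⟩ => by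
          have ht0 : 0 < t := hr.trans hrt
          refine mul_le_mul' (mul_le_mul' (hg hrt.le) ?_) ?_
          · exact ENNReal.ofReal_le_ofReal (Real.rpow_le_rpow_of_nonpos ht0 ht (neg_nonpos.2 hη))
          · exact ENNReal.ofReal_le_ofReal (inv_anti₀ ht0 ht)
  calc g r * ENNReal.ofReal (r ^ (-η))
      = ENNReal.ofReal (2 ^ (η + 1)) *
          (g r * ENNReal.ofReal ((2 * r) ^ (-η) * (2 * r)⁻¹ * r)) := by
        rw [hweight, ENNReal.ofReal_mul (by positivity)]
        ring
    _ ≤ _ := by gcongr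

theorem stmt_11_general (k : ℕ) (η s : ℝ) (hη : 0 < η) (hs : 1 < s) :
    ∃ C > 0, ∀ R : ℝ, 0 < R → ∀ ν : Measure (EuclideanSpace ℝ (Fin k)),
      IsFiniteMeasure ν → ∀ x : EuclideanSpace ℝ (Fin k),
      ∫⁻ r in Set.Ioc (0 : ℝ) (4 * R),
          (ν (ball x r) * ENNReal.ofReal (r ^ (-η))) ^ s * ENNReal.ofReal r⁻¹ ≤
        ENNReal.ofReal C * (∫⁻ r in Set.Ioc (0 : ℝ) (8 * R),
          ν (ball x r) * ENNReal.ofReal (r ^ (-η)) * ENNReal.ofReal r⁻¹) ^ s := by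
  refine ⟨(2 ^ (η + 1) : ℝ) ^ (s - 1), by positivity, fun R hR ν _ x => ?_⟩
  set I := ∫⁻ r in Ioc (0 : ℝ) (8 * R),
    ν (ball x r) * ENNReal.ofReal (r ^ (-η)) * ENNReal.ofReal r⁻¹
  rcases eq_or_ne I ∞ with hItop | hItop
  · rw [hItop, ENNReal.top_rpow_of_pos (by linarith), ENNReal.mul_top (by positivity)]
    exact le_top
  have hmono : Monotone fun r => ν (ball x r) := fun _ _ h => measure_mono (ball_subset_ball h)
  have hbound : ∀ r ∈ Ioc (0 : ℝ) (4 * R),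
      ν (ball x r) * ENNReal.ofReal (r ^ (-η)) ≤ ENNReal.ofReal (2 ^ (η + 1)) * I :=
    fun r hr => (hmono.mul_rpow_neg_le_setLIntegral_Ioc hη.le hr.1).trans <| by
      gcongr
      exact lintegral_mono_set (Ioc_subset_Ioc hr.1.le (by linarith [hr.2]))
  calc _ ≤ (ENNReal.ofReal (2 ^ (η + 1)) * I) ^ (s - 1) * ∫⁻ r in Ioc (0 : ℝ) (4 * R),
          ν (ball x r) * ENNReal.ofReal (r ^ (-η)) * ENNReal.ofReal r⁻¹ :=
        setLIntegral_rpow_mul_le measurableSet_Ioc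
          (ENNReal.mul_ne_top ENNReal.ofReal_ne_top hItop) hs.le hbound
    _ ≤ (ENNReal.ofReal (2 ^ (η + 1)) * I) ^ (s - 1) * I := by
        gcongr
        exact lintegral_mono_set (Ioc_subset_Ioc le_rfl (by linarith))
    _ = _ := by
        rw [ENNReal.mul_rpow_of_nonneg _ _ (by linarith), mul_assoc,
          ENNReal.rpow_sub_one_mul_self I hs.le, ENNReal.ofReal_rpow_of_pos (by positivity)]

/-- A Hedberg–Wolff-type inequality: the `s`-power Wolff-type integral
is dominated by the `s`-th power of the linear potential, with a constant depending only
on `s` and `η` (independent of `R`). -/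
theorem stmt_11 (k : ℕ) (hk : 1 ≤ k) (η s : ℝ) (hη : 0 < η) (hs : 1 < s) :
    ∃ C > 0, ∀ R : ℝ, 0 < R → ∀ ν : Measure (EuclideanSpace ℝ (Fin k)),
      IsFiniteMeasure ν → ∀ x : EuclideanSpace ℝ (Fin k),
      ∫⁻ r in Set.Ioc (0 : ℝ) (4 * R),
          (ν (ball x r) * ENNReal.ofReal (r ^ (-η))) ^ s * ENNReal.ofReal r⁻¹ ≤
        ENNReal.ofReal C * (∫⁻ r in Set.Ioc (0 : ℝ) (8 * R),
          ν (ball x r) * ENNReal.ofReal (r ^ (-η)) * ENNReal.ofReal r⁻¹) ^ s :=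
  stmt_11_general k η s hη hs
end

section
/- Let k ≥ 1 be an integer, m > 0, a > 0, s > 1 and R > 0, and let ν be a nonnegative finite Borel measure on ℝ^k with supp ν ⊆ B(0, R/2). Then there exists a constant C = C(k, m, a, s, R) > 0 such that for every x ∈ ℝ^k with |x| < R, ∫₀^{R} t^{a−1} ( ∫_{ℝ^k} (t + |x−y|)^{−m} dν(y) )^{s} dt ≤ C ∫₀^{4R} ν(B(x,r))^{s} r^{a − ms − 1} dr. -/
/-!
Split `ν` into the dyadic shells `B(x, 2ʲt) \ B(x, 2ʲ⁻¹t)`: on the `j`-th shell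
`(t + |x - y|)^(-m) ≤ 2^m (2ʲt)^(-m)`, and the shells with `2ʲt > 4R` are `ν`-null because `ν`
lives in `B(x, 2R)`. So the potential is at most `2^m ∑ⱼ g(2ʲt)` with
`g(u) = u^(-m) ν(B(x,u)) 1_{u ≤ 4R}`. Hölder with the geometric weights `2^(ja/2)` brings the
`s`-th power inside the sum, and the substitution `u = 2ʲt` turns the `j`-th term into
`2^(-ja)` times `∫ u^(a-1) g(u)^s du`, which is the right-hand side;
the remaining factors `2^(-ja/2)` form a convergent geometric series.
-/

open MeasureTheory Set Metric
open scoped ENNReal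

theorem lintegral_Ioi_comp_mul_left (G : ℝ → ℝ≥0∞) {c : ℝ} (hc : 0 < c) :
    ∫⁻ t in Ioi 0, G (c * t) = ENNReal.ofReal c⁻¹ * ∫⁻ u in Ioi 0, G u := by
  have hind : (Ioi (0 : ℝ)).indicator (fun t => G (c * t)) =
      fun t => (Ioi 0).indicator G (c * t) := by
    ext t
    simp [indicator_apply, mul_pos_iff_of_pos_left hc]
  have hmap := lintegral_map_equiv ((Ioi (0 : ℝ)).indicator G) (MeasurableEquiv.mulLeft₀ c hc.ne')
    (μ := volume)
  rw [MeasurableEquiv.coe_mulLeft₀, Real.map_volume_mul_left hc.ne', lintegral_smul_measure,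
    abs_of_pos (inv_pos.2 hc), smul_eq_mul] at hmap
  rw [← lintegral_indicator measurableSet_Ioi, ← lintegral_indicator measurableSet_Ioi, hind,
    ← hmap]

theorem lintegral_Ioi_rpow_mul_comp_mul_left (a : ℝ) (G : ℝ → ℝ≥0∞) {c : ℝ} (hc : 0 < c) :
    ∫⁻ t in Ioi 0, ENNReal.ofReal (t ^ (a - 1)) * G (c * t) =
      ENNReal.ofReal (c ^ (-a)) * ∫⁻ u in Ioi 0, ENNReal.ofReal (u ^ (a - 1)) * G u := by
  have hscale := lintegral_Ioi_comp_mul_left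
    (fun u => ENNReal.ofReal ((u / c) ^ (a - 1)) * G u) hc
  simp only [mul_div_cancel_left₀ _ hc.ne'] at hscale
  have hpull : ∫⁻ u in Ioi 0, ENNReal.ofReal ((u / c) ^ (a - 1)) * G u =
      ENNReal.ofReal (c ^ (1 - a)) * ∫⁻ u in Ioi 0, ENNReal.ofReal (u ^ (a - 1)) * G u := by
    rw [← lintegral_const_mul' _ _ ENNReal.ofReal_ne_top]
    refine setLIntegral_congr_fun measurableSet_Ioi fun u hu => ?_
    rw [← mul_assoc, ← ENNReal.ofReal_mul (by positivity), Real.div_rpow (le_of_lt hu) hc.le,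
      div_eq_mul_inv, ← Real.rpow_neg hc.le, neg_sub, mul_comm (u ^ (a - 1)), mul_comm]
  rw [hscale, hpull, ← mul_assoc, ← ENNReal.ofReal_mul (by positivity), ← Real.rpow_neg_one,
    ← Real.rpow_add hc, show -1 + (1 - a) = -a by ring]

theorem ENNReal.exists_tsum_rpow_le_mul_tsum_pow_mul_rpow {s : ℝ} (hs : 1 < s) {w : ℝ≥0∞}
    (hw : 1 < w) (hw_top : w ≠ ∞) :
    ∃ C ≠ ∞, ∀ b : ℕ → ℝ≥0∞, (∑' j, b j) ^ s ≤ C * ∑' j, w ^ j * b j ^ s := by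
  have hs0 : 0 < s := one_pos.trans hs
  have hs1 : 0 < s - 1 := sub_pos.2 hs
  have hps : (s / (s - 1)).HolderConjugate s := (Real.HolderConjugate.conjExponent hs).symm
  set q : ℝ≥0∞ := w ^ (-(1 / (s - 1)))
  have hq : q < 1 := ENNReal.rpow_lt_one_of_one_lt_of_neg hw (by simp [hs1])
  refine ⟨(1 - q)⁻¹ ^ (s - 1),
    ENNReal.rpow_ne_top_of_nonneg hs1.le (ENNReal.inv_ne_top.2 (tsub_pos_of_lt hq).ne'), ?_⟩
  intro b
  have hw_pow_ne_zero (j : ℕ) : w ^ j ≠ 0 := pow_ne_zero _ (zero_lt_one.trans hw).ne'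
  -- Hölder for the splitting `b j = (w ^ j) ^ (-1/s) * ((w ^ j) ^ (1/s) * b j)`.
  set f : ℕ → ℝ≥0∞ := fun j => (w ^ j) ^ (-(1 / s))
  set g : ℕ → ℝ≥0∞ := fun j => (w ^ j) ^ (1 / s) * b j
  have hfg (j : ℕ) : b j = (f * g) j := by
    rw [Pi.mul_apply, ← mul_assoc, ← ENNReal.rpow_add _ _ (hw_pow_ne_zero j)
      (ENNReal.pow_ne_top hw_top)]
    simp
  have hf (j : ℕ) : f j ^ (s / (s - 1)) = q ^ j := by
    simp only [f, q]
    rw [← ENNReal.rpow_natCast, ← ENNReal.rpow_natCast, ← ENNReal.rpow_mul, ← ENNReal.rpow_mul,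
      ← ENNReal.rpow_mul]
    congr 1
    field_simp
  have hg (j : ℕ) : g j ^ s = w ^ j * b j ^ s := by
    rw [ENNReal.mul_rpow_of_nonneg _ _ hs0.le, ← ENNReal.rpow_mul, one_div_mul_cancel hs0.ne',
      ENNReal.rpow_one]
  have hHolder := ENNReal.lintegral_mul_le_Lp_mul_Lq Measure.count hps
    (measurable_of_countable f).aemeasurable (measurable_of_countable g).aemeasurable
  simp only [lintegral_count, hf, hg, ← hfg, ENNReal.tsum_geometric] at hHolder
  calc (∑' j, b j) ^ s
      ≤ ((1 - q)⁻¹ ^ (1 / (s / (s - 1))) * (∑' j, w ^ j * b j ^ s) ^ (1 / s)) ^ s := by gcongr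
    _ = (1 - q)⁻¹ ^ (s - 1) * ∑' j, w ^ j * b j ^ s := by
      rw [ENNReal.mul_rpow_of_nonneg _ _ hs0.le, ← ENNReal.rpow_mul, ← ENNReal.rpow_mul,
        one_div_mul_cancel hs0.ne', ENNReal.rpow_one]
      congr 2
      field_simp

theorem exists_lintegral_rpow_mul_tsum_dyadic_rpow_le {a s : ℝ} (ha : 0 < a) (hs : 1 < s) :
    ∃ C ≠ ∞, ∀ G : ℝ → ℝ≥0∞, Measurable G →
      ∫⁻ t in Ioi 0, ENNReal.ofReal (t ^ (a - 1)) * (∑' j : ℕ, G (2 ^ j * t)) ^ s ≤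
        C * ∫⁻ u in Ioi 0, ENNReal.ofReal (u ^ (a - 1)) * G u ^ s := by
  set w : ℝ≥0∞ := ENNReal.ofReal (2 ^ (a / 2))
  have hw : 1 < w := by
    rw [← ENNReal.ofReal_one, ENNReal.ofReal_lt_ofReal_iff (by positivity)]
    exact Real.one_lt_rpow one_lt_two (by positivity)
  have hw_top : w ≠ ∞ := ENNReal.ofReal_ne_top
  obtain ⟨C, hC_top, hC⟩ := ENNReal.exists_tsum_rpow_le_mul_tsum_pow_mul_rpow hs hw hw_top
  -- the weight `w ^ j` is only half of the gain `2 ^ (-j a)` from rescaling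
  set q : ℝ≥0∞ := ENNReal.ofReal (2 ^ (-(a / 2)))
  have hq : q < 1 := by
    rw [← ENNReal.ofReal_one, ENNReal.ofReal_lt_ofReal_iff one_pos]
    exact Real.rpow_lt_one_of_one_lt_of_neg one_lt_two (by linarith)
  have hwq (j : ℕ) : w ^ j * ENNReal.ofReal ((2 ^ j : ℝ) ^ (-a)) = q ^ j := by
    have hpow : ((2 : ℝ) ^ j) ^ (-a) = (2 ^ (-a)) ^ j := by
      rw [← Real.rpow_natCast, ← Real.rpow_mul zero_le_two, mul_comm, Real.rpow_mul zero_le_two,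
        Real.rpow_natCast]
    rw [hpow, ENNReal.ofReal_pow (by positivity), ← mul_pow,
      ← ENNReal.ofReal_mul (by positivity), ← Real.rpow_add two_pos,
      show a / 2 + -a = -(a / 2) by ring]
  refine ⟨C * (1 - q)⁻¹, ENNReal.mul_ne_top hC_top (ENNReal.inv_ne_top.2 (tsub_pos_of_lt hq).ne'),
    fun G hG => ?_⟩
  have hGj (j : ℕ) : Measurable fun t : ℝ => G (2 ^ j * t) := hG.comp (measurable_const_mul _)
  calc ∫⁻ t in Ioi 0, ENNReal.ofReal (t ^ (a - 1)) * (∑' j : ℕ, G (2 ^ j * t)) ^ s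
      ≤ ∫⁻ t in Ioi 0,
          C * ∑' j : ℕ, w ^ j * (ENNReal.ofReal (t ^ (a - 1)) * G (2 ^ j * t) ^ s) := by
        refine lintegral_mono fun t => ?_
        calc ENNReal.ofReal (t ^ (a - 1)) * (∑' j : ℕ, G (2 ^ j * t)) ^ s
            ≤ ENNReal.ofReal (t ^ (a - 1)) * (C * ∑' j : ℕ, w ^ j * G (2 ^ j * t) ^ s) := by
              gcongr
              exact hC _
          _ = _ := by
              rw [← ENNReal.tsum_mul_left, ← ENNReal.tsum_mul_left, ← ENNReal.tsum_mul_left]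
              congr 1 with j
              ring
    _ = C * ∑' j : ℕ,
          w ^ j * ∫⁻ t in Ioi 0, ENNReal.ofReal (t ^ (a - 1)) * G (2 ^ j * t) ^ s := by
        rw [lintegral_const_mul' _ _ hC_top, lintegral_tsum fun j => by
          have := hGj j; fun_prop]
        simp_rw [lintegral_const_mul' _ _ (ENNReal.pow_ne_top hw_top)]
    _ = C * (1 - q)⁻¹ * ∫⁻ u in Ioi 0, ENNReal.ofReal (u ^ (a - 1)) * G u ^ s := by
        have hscale (j : ℕ) :
            ∫⁻ t in Ioi 0, ENNReal.ofReal (t ^ (a - 1)) * G (2 ^ j * t) ^ s =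
              ENNReal.ofReal ((2 ^ j : ℝ) ^ (-a)) *
                ∫⁻ u in Ioi 0, ENNReal.ofReal (u ^ (a - 1)) * G u ^ s :=
          lintegral_Ioi_rpow_mul_comp_mul_left a (fun u => G u ^ s) (by positivity)
        simp_rw [hscale, ← mul_assoc (w ^ _), hwq, ENNReal.tsum_mul_right,
          ENNReal.tsum_geometric, mul_assoc]

theorem exists_pow_two_mul_near {t d : ℝ} (ht : 0 < t) :
    ∃ j : ℕ, d < 2 ^ j * t ∧ 2 ^ j * t ≤ 2 * max t d := by
  rcases lt_or_ge d t with hdt | htd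
  · exact ⟨0, by simpa using hdt, by simp only [pow_zero, one_mul]; linarith [le_max_left t d]⟩
  · obtain ⟨n, hn, hn'⟩ := exists_nat_pow_near ((one_le_div ht).2 htd) one_lt_two
    rw [le_div_iff₀ ht] at hn
    rw [div_lt_iff₀ ht] at hn'
    refine ⟨n + 1, hn', ?_⟩
    rw [pow_succ]
    linarith [le_max_right t d]

theorem rpow_neg_le_two_rpow_mul_rpow_neg {u v m : ℝ} (hu : 0 < u) (huv : u ≤ 2 * v) (hm : 0 ≤ m) :
    v ^ (-m) ≤ 2 ^ m * u ^ (-m) := by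
  calc v ^ (-m) ≤ (u / 2) ^ (-m) :=
        Real.rpow_le_rpow_of_nonpos (by positivity) (by linarith) (by linarith)
    _ = 2 ^ m * u ^ (-m) := by
      rw [Real.div_rpow hu.le zero_le_two, Real.rpow_neg zero_le_two, div_inv_eq_mul, mul_comm]

theorem lintegral_rpow_neg_add_dist_le_tsum {X : Type*} [PseudoMetricSpace X] [MeasurableSpace X]
    [OpensMeasurableSpace X] {ν : Measure X} {x : X} {ρ t m : ℝ} (hν : ν (ball x ρ)ᶜ = 0)
    (ht : 0 < t) (htρ : t < ρ) (hm : 0 ≤ m) :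
    ∫⁻ y, ENNReal.ofReal ((t + dist x y) ^ (-m)) ∂ν ≤
      ENNReal.ofReal (2 ^ m) * ∑' j : ℕ,
        (Iic (2 * ρ)).indicator (fun u => ENNReal.ofReal (u ^ (-m)) * ν (ball x u))
          (2 ^ j * t) := by
  set c : ℕ → ℝ≥0∞ := fun j =>
    (Iic (2 * ρ)).indicator (fun u => ENNReal.ofReal (u ^ (-m))) (2 ^ j * t)
  have hc (j : ℕ) : ∫⁻ y, (ball x (2 ^ j * t)).indicator (fun _ => c j) y ∂ν =
      (Iic (2 * ρ)).indicator (fun u => ENNReal.ofReal (u ^ (-m)) * ν (ball x u)) (2 ^ j * t) := by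
    rw [lintegral_indicator_const measurableSet_ball]
    by_cases hj : 2 ^ j * t ∈ Iic (2 * ρ) <;> simp [c, hj]
  have hpointwise : ∀ᵐ y ∂ν, ENNReal.ofReal ((t + dist x y) ^ (-m)) ≤
      ENNReal.ofReal (2 ^ m) * ∑' j : ℕ, (ball x (2 ^ j * t)).indicator (fun _ => c j) y := by
    filter_upwards [measure_eq_zero_iff_ae_notMem.1 hν] with y hy
    rw [notMem_compl_iff, mem_ball'] at hy
    obtain ⟨j, hyj, hj⟩ := exists_pow_two_mul_near (d := dist x y) ht
    have hjρ : 2 ^ j * t ∈ Iic (2 * ρ) := by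
      simp only [mem_Iic]
      linarith [max_lt htρ hy]
    calc ENNReal.ofReal ((t + dist x y) ^ (-m))
        ≤ ENNReal.ofReal (2 ^ m * (2 ^ j * t) ^ (-m)) := by
          refine ENNReal.ofReal_le_ofReal (rpow_neg_le_two_rpow_mul_rpow_neg (by positivity) ?_ hm)
          linarith [max_le_add_of_nonneg ht.le (dist_nonneg (x := x) (y := y))]
      _ = ENNReal.ofReal (2 ^ m) * (ball x (2 ^ j * t)).indicator (fun _ => c j) y := by
          rw [indicator_of_mem (mem_ball'.2 hyj), ENNReal.ofReal_mul (by positivity)]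
          simp [c, hjρ]
      _ ≤ _ := by gcongr; exact ENNReal.le_tsum j
  calc ∫⁻ y, ENNReal.ofReal ((t + dist x y) ^ (-m)) ∂ν
      ≤ ∫⁻ y, ENNReal.ofReal (2 ^ m) *
          ∑' j : ℕ, (ball x (2 ^ j * t)).indicator (fun _ => c j) y ∂ν :=
        lintegral_mono_ae hpointwise
    _ = _ := by
      rw [lintegral_const_mul' _ _ ENNReal.ofReal_ne_top,
        lintegral_tsum fun j => (measurable_const.indicator measurableSet_ball).aemeasurable]
      simp_rw [hc]

theorem lintegral_Ioi_rpow_mul_indicator_rpow_neg_mul_rpow {a m s L : ℝ} (hs : 0 < s)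
    (M : ℝ → ℝ≥0∞) :
    ∫⁻ u in Ioi 0, ENNReal.ofReal (u ^ (a - 1)) *
        (Iic L).indicator (fun u => ENNReal.ofReal (u ^ (-m)) * M u) u ^ s =
      ∫⁻ u in Ioc 0 L, M u ^ s * ENNReal.ofReal (u ^ (a - m * s - 1)) := by
  have hind : (fun u => ENNReal.ofReal (u ^ (a - 1)) *
        (Iic L).indicator (fun u => ENNReal.ofReal (u ^ (-m)) * M u) u ^ s) =
      (Iic L).indicator fun u =>
        ENNReal.ofReal (u ^ (a - 1)) * (ENNReal.ofReal (u ^ (-m)) * M u) ^ s := by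
    ext u
    by_cases hu : u ∈ Iic L <;> simp [hu, hs]
  rw [hind, lintegral_indicator measurableSet_Iic, Measure.restrict_restrict measurableSet_Iic,
    Iic_inter_Ioi]
  refine setLIntegral_congr_fun measurableSet_Ioc fun u hu => ?_
  rw [ENNReal.mul_rpow_of_nonneg _ _ hs.le,
    ENNReal.ofReal_rpow_of_pos (Real.rpow_pos_of_pos hu.1 _), ← mul_assoc,
    ← ENNReal.ofReal_mul (Real.rpow_nonneg hu.1.le _), ← Real.rpow_mul hu.1.le,
    ← Real.rpow_add hu.1, mul_comm, show a - 1 + -m * s = a - m * s - 1 by ring]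

theorem stmt_12_general (k : ℕ) (m a s R : ℝ)
    (hm : 0 < m) (ha : 0 < a) (hs : 1 < s) :
    ∃ C > 0, ∀ ν : Measure (EuclideanSpace ℝ (Fin k)), IsFiniteMeasure ν →
      ν (ball (0 : EuclideanSpace ℝ (Fin k)) (R / 2))ᶜ = 0 →
      ∀ x : EuclideanSpace ℝ (Fin k), ‖x‖ < R →
      ∫⁻ t in Set.Ioc (0 : ℝ) R, ENNReal.ofReal (t ^ (a - 1)) *
          (∫⁻ y, ENNReal.ofReal ((t + dist x y) ^ (-m)) ∂ν) ^ s ≤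
        ENNReal.ofReal C * ∫⁻ r in Set.Ioc (0 : ℝ) (4 * R),
          (ν (ball x r)) ^ s * ENNReal.ofReal (r ^ (a - m * s - 1)) := by
  obtain ⟨C, hC_top, hC⟩ := exists_lintegral_rpow_mul_tsum_dyadic_rpow_le ha hs
  have hK_top : ENNReal.ofReal (2 ^ m) ^ s * C ≠ ∞ :=
    ENNReal.mul_ne_top (ENNReal.rpow_ne_top_of_nonneg (by linarith) ENNReal.ofReal_ne_top) hC_top
  refine ⟨(ENNReal.ofReal (2 ^ m) ^ s * C).toReal + 1, by positivity, fun ν _ hν x hx => ?_⟩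
  have hν' : ν (ball x (2 * R))ᶜ = 0 := by
    refine measure_mono_null (compl_subset_compl.2 (ball_subset_ball' ?_)) hν
    rw [dist_zero_left]
    linarith [norm_nonneg x]
  set g : ℝ → ℝ≥0∞ :=
    (Iic (2 * (2 * R))).indicator fun u => ENNReal.ofReal (u ^ (-m)) * ν (ball x u)
  have hball : Monotone fun u => ν (ball x u) := fun _ _ huv => measure_mono (ball_subset_ball huv)
  have hg : Measurable g :=
    ((by fun_prop : Measurable fun u : ℝ => ENNReal.ofReal (u ^ (-m))).mul
      hball.measurable).indicator measurableSet_Iic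
  calc ∫⁻ t in Ioc 0 R, ENNReal.ofReal (t ^ (a - 1)) *
          (∫⁻ y, ENNReal.ofReal ((t + dist x y) ^ (-m)) ∂ν) ^ s
      ≤ ∫⁻ t in Ioi 0, ENNReal.ofReal (t ^ (a - 1)) *
          (ENNReal.ofReal (2 ^ m) * ∑' j : ℕ, g (2 ^ j * t)) ^ s := by
        refine (setLIntegral_mono' measurableSet_Ioc fun t ht => ?_).trans
          (lintegral_mono_set Ioc_subset_Ioi_self)
        gcongr
        exact lintegral_rpow_neg_add_dist_le_tsum hν' ht.1 (by linarith [ht.1, ht.2]) hm.le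
    _ = ENNReal.ofReal (2 ^ m) ^ s * ∫⁻ t in Ioi 0, ENNReal.ofReal (t ^ (a - 1)) *
          (∑' j : ℕ, g (2 ^ j * t)) ^ s := by
        simp_rw [ENNReal.mul_rpow_of_nonneg _ _ (by linarith : 0 ≤ s), mul_left_comm _ (_ ^ s)]
        exact lintegral_const_mul' _ _
          (ENNReal.rpow_ne_top_of_nonneg (by linarith) ENNReal.ofReal_ne_top)
    _ ≤ ENNReal.ofReal (2 ^ m) ^ s * C * ∫⁻ r in Ioc 0 (4 * R),
          (ν (ball x r)) ^ s * ENNReal.ofReal (r ^ (a - m * s - 1)) := by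
        rw [mul_assoc, show 4 * R = 2 * (2 * R) by ring,
          ← lintegral_Ioi_rpow_mul_indicator_rpow_neg_mul_rpow (by linarith)]
        gcongr
        exact hC g hg
    _ ≤ _ := by
        gcongr
        rw [ENNReal.le_ofReal_iff_toReal_le hK_top (by positivity)]
        linarith

/-- Upper bound: for a finite measure `ν` supported in `B(0, R/2)`,
the weighted integral of the `s`-th power of the Riesz-type potential
`∫ (t + |x−y|)^{−m} dν(y)` is dominated by `∫₀^{4R} ν(B(x,r))^s r^{a−ms−1} dr`. -/
theorem stmt_12 (k : ℕ) (hk : 1 ≤ k) (m a s R : ℝ)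
    (hm : 0 < m) (ha : 0 < a) (hs : 1 < s) (hR : 0 < R) :
    ∃ C > 0, ∀ ν : Measure (EuclideanSpace ℝ (Fin k)), IsFiniteMeasure ν →
      ν (ball (0 : EuclideanSpace ℝ (Fin k)) (R / 2))ᶜ = 0 →
      ∀ x : EuclideanSpace ℝ (Fin k), ‖x‖ < R →
      ∫⁻ t in Set.Ioc (0 : ℝ) R, ENNReal.ofReal (t ^ (a - 1)) *
          (∫⁻ y, ENNReal.ofReal ((t + dist x y) ^ (-m)) ∂ν) ^ s ≤
        ENNReal.ofReal C * ∫⁻ r in Set.Ioc (0 : ℝ) (4 * R),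
          (ν (ball x r)) ^ s * ENNReal.ofReal (r ^ (a - m * s - 1)) :=
  stmt_12_general k m a s R hm ha hs
end

section
/- Let k ≥ 1 be an integer, m > 0, a > 0, s > 0 and R > 0, and let ν be a nonnegative finite Borel measure on ℝ^k. Then there exists a constant c = c(k, m, a, s) > 0 such that for every x ∈ ℝ^k, ∫₀^{R} t^{a−1} ( ∫_{ℝ^k} (t + |x−y|)^{−m} dν(y) )^{s} dt ≥ c sup_{0 < r < R/2} ν(B(x,r))^{s} r^{a − ms}. -/
open MeasureTheory Set Metric

/-! On `t ∈ (r, 2r]` every `y ∈ B(x, r)` has `t + |x - y| < 3r`, so the inner integral is at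
least `(3r)^{-m} ν(B(x,r))`, while `t^{a-1}` is comparable to `r^{a-1}`. Integrating this
pointwise bound over `(r, 2r] ⊆ (0, R]`, an interval of length `r`, gives
`ν(B(x,r))^s r^{a-ms}` up to the constant `min(1, 2^{a-1}) · 3^{-ms}`. -/

lemma min_one_two_rpow_mul_rpow_le {r t : ℝ} (b : ℝ) (hr : 0 < r) (hrt : r ≤ t)
    (ht : t ≤ 2 * r) : min 1 (2 ^ b) * r ^ b ≤ t ^ b := by
  rcases le_total 0 b with hb | hb
  · calc min 1 (2 ^ b) * r ^ b ≤ 1 * r ^ b := by gcongr; exact min_le_left _ _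
      _ ≤ t ^ b := by rw [one_mul]; exact Real.rpow_le_rpow hr.le hrt hb
  · calc min 1 (2 ^ b) * r ^ b ≤ 2 ^ b * r ^ b := by gcongr; exact min_le_right _ _
      _ = (2 * r) ^ b := (Real.mul_rpow zero_le_two hr.le).symm
      _ ≤ t ^ b := Real.rpow_le_rpow_of_nonpos (hr.trans_le hrt) ht hb

section

variable {X : Type*} [PseudoMetricSpace X] [MeasurableSpace X] [OpensMeasurableSpace X]

lemma rpow_mul_measure_ball_le_lintegral (ν : Measure X) (x : X) {m r t : ℝ} (hm : 0 ≤ m)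
    (ht : 0 < t) (ht2 : t ≤ 2 * r) :
    ENNReal.ofReal ((3 * r) ^ (-m)) * ν (ball x r) ≤
      ∫⁻ y, ENNReal.ofReal ((t + dist x y) ^ (-m)) ∂ν := by
  calc ENNReal.ofReal ((3 * r) ^ (-m)) * ν (ball x r)
      = ∫⁻ _ in ball x r, ENNReal.ofReal ((3 * r) ^ (-m)) ∂ν := (setLIntegral_const _ _).symm
    _ ≤ ∫⁻ y in ball x r, ENNReal.ofReal ((t + dist x y) ^ (-m)) ∂ν := by
        refine setLIntegral_mono' measurableSet_ball fun y hy => ENNReal.ofReal_le_ofReal ?_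
        have hxy : dist x y < r := mem_ball'.mp hy
        exact Real.rpow_le_rpow_of_nonpos (by positivity) (by linarith) (neg_nonpos.mpr hm)
    _ ≤ ∫⁻ y, ENNReal.ofReal ((t + dist x y) ^ (-m)) ∂ν := setLIntegral_le_lintegral _ _

lemma measure_ball_rpow_mul_le_lintegral (ν : Measure X) (x : X) {m a s r R : ℝ}
    (hm : 0 ≤ m) (hs : 0 ≤ s) (hr : 0 < r) (hrR : 2 * r ≤ R) :
    ENNReal.ofReal (min 1 (2 ^ (a - 1)) * 3 ^ (-(m * s))) *
        (ν (ball x r) ^ s * ENNReal.ofReal (r ^ (a - m * s))) ≤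
      ∫⁻ t in Ioc 0 R, ENNReal.ofReal (t ^ (a - 1)) *
        (∫⁻ y, ENNReal.ofReal ((t + dist x y) ^ (-m)) ∂ν) ^ s := by
  set C : ℝ := min 1 (2 ^ (a - 1))
  set K := ENNReal.ofReal (C * r ^ (a - 1)) * (ENNReal.ofReal ((3 * r) ^ (-m)) * ν (ball x r)) ^ s
  have hK : ∀ t ∈ Ioc r (2 * r), K ≤ ENNReal.ofReal (t ^ (a - 1)) *
      (∫⁻ y, ENNReal.ofReal ((t + dist x y) ^ (-m)) ∂ν) ^ s := fun t ht => by
    dsimp only [K]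
    gcongr
    · exact min_one_two_rpow_mul_rpow_le _ hr ht.1.le ht.2
    · exact rpow_mul_measure_ball_le_lintegral ν x hm (hr.trans ht.1) ht.2
  have hreal : C * 3 ^ (-(m * s)) * r ^ (a - m * s) =
      C * r ^ (a - 1) * (3 * r) ^ (-(m * s)) * r := by
    have hsplit : r ^ (a - m * s) = r ^ (a - 1) * r ^ (-(m * s)) * r := by
      rw [← Real.rpow_add hr, ← Real.rpow_add_one hr.ne']
      ring_nf
    rw [Real.mul_rpow zero_le_three hr.le, hsplit]
    ring
  have hpow : ENNReal.ofReal ((3 * r) ^ (-m)) ^ s = ENNReal.ofReal ((3 * r) ^ (-(m * s))) := by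
    rw [ENNReal.ofReal_rpow_of_nonneg (by positivity) hs, ← Real.rpow_mul (by positivity),
      neg_mul]
  calc ENNReal.ofReal (C * 3 ^ (-(m * s))) * (ν (ball x r) ^ s * ENNReal.ofReal (r ^ (a - m * s)))
      = ENNReal.ofReal (C * 3 ^ (-(m * s)) * r ^ (a - m * s)) * ν (ball x r) ^ s := by
        rw [ENNReal.ofReal_mul (by positivity : 0 ≤ C * 3 ^ (-(m * s)))]
        ring
    _ = K * volume (Ioc r (2 * r)) := by
        dsimp only [K]
        rw [hreal, Real.volume_Ioc, show 2 * r - r = r by ring, ENNReal.mul_rpow_of_nonneg _ _ hs,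
          hpow, ENNReal.ofReal_mul (by positivity : 0 ≤ C * r ^ (a - 1) * (3 * r) ^ (-(m * s))),
          ENNReal.ofReal_mul (by positivity : 0 ≤ C * r ^ (a - 1))]
        ring
    _ = ∫⁻ _ in Ioc r (2 * r), K := (setLIntegral_const _ _).symm
    _ ≤ ∫⁻ t in Ioc r (2 * r), ENNReal.ofReal (t ^ (a - 1)) *
        (∫⁻ y, ENNReal.ofReal ((t + dist x y) ^ (-m)) ∂ν) ^ s :=
        setLIntegral_mono' measurableSet_Ioc hK
    _ ≤ _ := lintegral_mono_set (Ioc_subset_Ioc hr.le hrR)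

end

theorem stmt_13_general (k : ℕ) (m a s : ℝ) (hm : 0 < m) (hs : 0 < s) :
    ∃ c > 0, ∀ R : ℝ, 0 < R → ∀ ν : Measure (EuclideanSpace ℝ (Fin k)),
      IsFiniteMeasure ν → ∀ x : EuclideanSpace ℝ (Fin k),
      ENNReal.ofReal c *
          ⨆ r ∈ Set.Ioo (0 : ℝ) (R / 2), (ν (ball x r)) ^ s * ENNReal.ofReal (r ^ (a - m * s)) ≤
        ∫⁻ t in Set.Ioc (0 : ℝ) R, ENNReal.ofReal (t ^ (a - 1)) *
          (∫⁻ y, ENNReal.ofReal ((t + dist x y) ^ (-m)) ∂ν) ^ s := by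
  refine ⟨min 1 (2 ^ (a - 1)) * 3 ^ (-(m * s)),
    mul_pos (lt_min one_pos (by positivity)) (by positivity), fun R _ ν _ x => ?_⟩
  simp only [ENNReal.mul_iSup]
  refine iSup₂_le fun r hr => ?_
  exact measure_ball_rpow_mul_le_lintegral ν x hm.le hs.le hr.1 (by linarith [hr.2])

/-- Lower bound: the weighted integral of the `s`-th power of the
Riesz-type potential dominates the maximal quantity `sup_{0<r<R/2} ν(B(x,r))^s r^{a−ms}`,
with a constant depending only on `k, m, a, s` (independent of `R` and `ν`). -/
theorem stmt_13 (k : ℕ) (hk : 1 ≤ k) (m a s : ℝ) (hm : 0 < m) (ha : 0 < a) (hs : 0 < s) :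
    ∃ c > 0, ∀ R : ℝ, 0 < R → ∀ ν : Measure (EuclideanSpace ℝ (Fin k)),
      IsFiniteMeasure ν → ∀ x : EuclideanSpace ℝ (Fin k),
      ENNReal.ofReal c *
          ⨆ r ∈ Set.Ioo (0 : ℝ) (R / 2), (ν (ball x r)) ^ s * ENNReal.ofReal (r ^ (a - m * s)) ≤
        ∫⁻ t in Set.Ioc (0 : ℝ) R, ENNReal.ofReal (t ^ (a - 1)) *
          (∫⁻ y, ENNReal.ofReal ((t + dist x y) ^ (-m)) ∂ν) ^ s :=
  stmt_13_general k m a s hm hs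
end

section
/- Let k ≥ 1 be an integer, m > 0 and R > 0, and let ν be a nonnegative finite Borel measure on ℝ^k with supp ν ⊆ B(0, R/2). Then there exist constants c, C > 0 depending only on k and m such that for every x ∈ ℝ^k with |x| < R and every t with 0 < t < R, c ∫_{t}^{∞} ν(B(x,r)) r^{−m−1} dr ≤ ∫_{ℝ^k} (t + |x−y|)^{−m} dν(y) ≤ C ∫_{t}^{4R} ν(B(x,r)) r^{−m−1} dr. -/
open MeasureTheory Set Metric

open scoped ENNReal

variable {k : ℕ}

lemma key_ofReal {m a : ℝ} (hm : 0 < m) (ha : 0 < a) :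
    ENNReal.ofReal (a ^ (-m)) = ∫⁻ r in Set.Ioi a, ENNReal.ofReal (m * r ^ (-m - 1)) := by
  have hlt : (-m - 1 : ℝ) < -1 := by linarith
  have hint : IntegrableOn (fun r : ℝ => r ^ (-m - 1)) (Set.Ioi a) :=
    integrableOn_Ioi_rpow_of_lt hlt ha
  have h1 : ∫⁻ r in Set.Ioi a, ENNReal.ofReal (m * r ^ (-m - 1))
      = ENNReal.ofReal (∫ r in Set.Ioi a, m * r ^ (-m - 1)) := by
    rw [← ofReal_integral_eq_lintegral_ofReal (hint.const_mul m)]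
    filter_upwards [ae_restrict_mem measurableSet_Ioi] with r hr
    exact mul_nonneg hm.le (Real.rpow_nonneg (ha.trans hr).le _)
  rw [h1, integral_const_mul, integral_Ioi_rpow_of_lt hlt ha]
  congr 1
  have : -m - 1 + 1 = -m := by ring
  rw [this]
  field_simp

lemma key_tonelli {m t : ℝ} (hm : 0 < m) (ht : 0 < t)
    (x : EuclideanSpace ℝ (Fin k)) (ν : Measure (EuclideanSpace ℝ (Fin k))) [IsFiniteMeasure ν] :
    (∫⁻ y, ENNReal.ofReal ((t + dist x y) ^ (-m)) ∂ν)
      = ∫⁻ r in Set.Ioi t, ν (ball x (r - t)) * ENNReal.ofReal (m * r ^ (-m - 1)) := by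
  have hmes : Measurable (fun p : EuclideanSpace ℝ (Fin k) × ℝ =>
      Set.indicator {p : EuclideanSpace ℝ (Fin k) × ℝ | t + dist x p.1 < p.2}
        (fun p => ENNReal.ofReal (m * p.2 ^ (-m - 1))) p) := by
    apply Measurable.indicator
    · fun_prop
    · exact measurableSet_lt (by fun_prop) measurable_snd
  have step1 : ∀ y : EuclideanSpace ℝ (Fin k),
      ENNReal.ofReal ((t + dist x y) ^ (-m)) = ∫⁻ r,
        Set.indicator {p : EuclideanSpace ℝ (Fin k) × ℝ | t + dist x p.1 < p.2}
          (fun p => ENNReal.ofReal (m * p.2 ^ (-m - 1))) (y, r) := by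
    intro y
    have : (fun r : ℝ => Set.indicator {p : EuclideanSpace ℝ (Fin k) × ℝ | t + dist x p.1 < p.2}
          (fun p => ENNReal.ofReal (m * p.2 ^ (-m - 1))) (y, r))
        = fun r => Set.indicator (Set.Ioi (t + dist x y))
          (fun r => ENNReal.ofReal (m * r ^ (-m - 1))) r := by
      funext r
      simp [Set.indicator_apply, Set.mem_setOf_eq, Set.mem_Ioi]
    rw [this, lintegral_indicator measurableSet_Ioi]
    exact key_ofReal hm (by positivity : (0:ℝ) < t + dist x y)
  calc (∫⁻ y, ENNReal.ofReal ((t + dist x y) ^ (-m)) ∂ν)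
      = ∫⁻ y, (∫⁻ (r : ℝ), Set.indicator {p : EuclideanSpace ℝ (Fin k) × ℝ | t + dist x p.1 < p.2}
          (fun p => ENNReal.ofReal (m * p.2 ^ (-m - 1))) (y, r)) ∂ν := by simp_rw [step1]
    _ = ∫⁻ (r : ℝ), (∫⁻ y, Set.indicator {p : EuclideanSpace ℝ (Fin k) × ℝ | t + dist x p.1 < p.2}
          (fun p => ENNReal.ofReal (m * p.2 ^ (-m - 1))) (y, r) ∂ν) := by
        exact lintegral_lintegral_swap (by exact hmes.aemeasurable)
    _ = ∫⁻ r, ν (ball x (r - t)) * ENNReal.ofReal (m * r ^ (-m - 1)) := by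
        congr 1; funext r
        have : (fun y => Set.indicator {p : EuclideanSpace ℝ (Fin k) × ℝ | t + dist x p.1 < p.2}
            (fun p => ENNReal.ofReal (m * p.2 ^ (-m - 1))) (y, r))
            = fun y => Set.indicator (ball x (r - t))
              (fun _ => ENNReal.ofReal (m * r ^ (-m - 1))) y := by
          funext y
          simp only [Set.indicator_apply, Set.mem_setOf_eq, mem_ball]
          congr 1
          simp [dist_comm, lt_sub_iff_add_lt']
        rw [this, lintegral_indicator measurableSet_ball, setLIntegral_const, mul_comm]
    _ = ∫⁻ r in Set.Ioi t, ν (ball x (r - t)) * ENNReal.ofReal (m * r ^ (-m - 1)) := by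
        rw [← lintegral_indicator measurableSet_Ioi]
        congr 1; funext r
        rcases le_or_gt r t with h | h
        · simp [Set.indicator_apply, not_lt.2 h, ball_eq_empty.2 (by linarith : r - t ≤ 0)]
        · simp [Set.indicator_apply, h]

lemma shift_lemma {m t : ℝ} (x : EuclideanSpace ℝ (Fin k))
    (ν : Measure (EuclideanSpace ℝ (Fin k))) :
    ∫⁻ r in Set.Ioi t, ν (ball x (r - t)) * ENNReal.ofReal (m * r ^ (-m - 1))
      = ∫⁻ s in Set.Ioi (0:ℝ), ν (ball x s) * ENNReal.ofReal (m * (s + t) ^ (-m - 1)) := by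
  have := lintegral_add_right_eq_self
    (μ := (volume : Measure ℝ))
    (f := fun r => Set.indicator (Set.Ioi t)
      (fun r => ν (ball x (r - t)) * ENNReal.ofReal (m * r ^ (-m - 1))) r) t
  rw [← lintegral_indicator measurableSet_Ioi, ← this]
  rw [← lintegral_indicator (measurableSet_Ioi (a := (0:ℝ)))]
  congr 1; funext s
  rcases le_or_gt s 0 with h | h
  · simp [Set.indicator_apply, not_lt.2 h, not_lt.2 (by linarith : ¬ t < s + t ∨ True).elim]
  · simp [Set.indicator_apply, h, lt_add_iff_pos_left t |>.2 h, add_sub_cancel_right]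

lemma mid_calc {m a : ℝ} (hm : 0 < m) (ha : 0 < a) :
    ∫⁻ r in Set.Ioc a (2*a), ENNReal.ofReal (m * r ^ (-m - 1))
      = ENNReal.ofReal (a ^ (-m) - (2*a) ^ (-m)) := by
  have h2a : (0:ℝ) < 2*a := by linarith
  have hsplit : ∫⁻ r in Set.Ioi a, ENNReal.ofReal (m * r ^ (-m - 1))
      = (∫⁻ r in Set.Ioc a (2*a), ENNReal.ofReal (m * r ^ (-m - 1)))
        + ∫⁻ r in Set.Ioi (2*a), ENNReal.ofReal (m * r ^ (-m - 1)) := by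
    rw [← Set.Ioc_union_Ioi_eq_Ioi (by linarith : a ≤ 2*a),
      lintegral_union measurableSet_Ioi (Set.Ioc_disjoint_Ioi le_rfl)]
  rw [← key_ofReal hm ha, ← key_ofReal hm h2a] at hsplit
  have := ENNReal.eq_sub_of_add_eq (ENNReal.ofReal_ne_top) hsplit.symm
  rw [this, ← ENNReal.ofReal_sub _ (Real.rpow_nonneg h2a.le _)]

/-- Two-sided estimate of the Riesz-type potential
`∫ (t + |x−y|)^{−m} dν(y)` by truncated Wolff-type integrals `∫ ν(B(x,r)) r^{−m−1} dr`,
with constants depending only on `k` and `m`. -/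
theorem stmt_14 (k : ℕ) (hk : 1 ≤ k) (m : ℝ) (hm : 0 < m) :
    ∃ c > 0, ∃ C > 0, ∀ R : ℝ, 0 < R → ∀ ν : Measure (EuclideanSpace ℝ (Fin k)),
      IsFiniteMeasure ν → ν (ball (0 : EuclideanSpace ℝ (Fin k)) (R / 2))ᶜ = 0 →
      ∀ x : EuclideanSpace ℝ (Fin k), ‖x‖ < R → ∀ t : ℝ, 0 < t → t < R →
      ENNReal.ofReal c *
          (∫⁻ r in Set.Ioi t, ν (ball x r) * ENNReal.ofReal (r ^ (-m - 1))) ≤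
        (∫⁻ y, ENNReal.ofReal ((t + dist x y) ^ (-m)) ∂ν) ∧
      (∫⁻ y, ENNReal.ofReal ((t + dist x y) ^ (-m)) ∂ν) ≤
        ENNReal.ofReal C *
          ∫⁻ r in Set.Ioc t (4 * R), ν (ball x r) * ENNReal.ofReal (r ^ (-m - 1)) := by
  have h2m : (1:ℝ) < (2:ℝ) ^ m := by
    rw [show (1:ℝ) = (2:ℝ) ^ (0:ℝ) by simp]
    exact Real.rpow_lt_rpow_of_exponent_lt one_lt_two hm
  refine ⟨m * (2:ℝ) ^ (-m - 1), by positivity, (1 + 1/((2:ℝ)^m - 1)) * m,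
    by have h1 : (0:ℝ) < (2:ℝ)^m - 1 := by linarith
       nlinarith [one_div_pos.mpr h1],
    fun R hR ν hfin hsupp x hx t ht htR => ?_⟩
  have key := key_tonelli (k := k) hm ht x ν
  constructor
  · -- lower bound
    rw [key, shift_lemma]
    calc ENNReal.ofReal (m * (2:ℝ) ^ (-m - 1)) *
          ∫⁻ r in Set.Ioi t, ν (ball x r) * ENNReal.ofReal (r ^ (-m - 1))
        = ∫⁻ r in Set.Ioi t, ν (ball x r) * ENNReal.ofReal (m * (2:ℝ)^(-m-1) * r ^ (-m - 1)) := by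
          rw [← lintegral_const_mul' _ _ ENNReal.ofReal_ne_top]
          congr 1; funext r
          rw [ENNReal.ofReal_mul (p := m * (2:ℝ)^(-m-1)) (by positivity)]
          ring
      _ ≤ ∫⁻ r in Set.Ioi t, ν (ball x r) * ENNReal.ofReal (m * (r + t) ^ (-m - 1)) := by
          apply lintegral_mono_ae
          filter_upwards [ae_restrict_mem measurableSet_Ioi] with r hr
          have hr' : t < r := hr
          apply mul_le_mul_right
          apply ENNReal.ofReal_le_ofReal
          rw [mul_assoc]
          apply mul_le_mul_of_nonneg_left _ hm.le
          have h2r : (2:ℝ)^(-m-1) * r^(-m-1) = (2*r)^(-m-1) := by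
            rw [Real.mul_rpow (by norm_num) (by linarith)]
          rw [h2r]
          exact Real.rpow_le_rpow_of_nonpos (by linarith) (by linarith) (by linarith)
      _ ≤ ∫⁻ s in Set.Ioi (0:ℝ), ν (ball x s) * ENNReal.ofReal (m * (s + t) ^ (-m - 1)) :=
          lintegral_mono_set (Set.Ioi_subset_Ioi ht.le)
  · -- upper bound
    rw [key]
    have hνU : ν Set.univ ≤ ν (ball (0 : EuclideanSpace ℝ (Fin k)) (R/2)) := by
      calc ν Set.univ = ν ((ball (0 : EuclideanSpace ℝ (Fin k)) (R/2)) ∪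
            (ball (0 : EuclideanSpace ℝ (Fin k)) (R/2))ᶜ) := by simp
        _ ≤ ν (ball (0 : EuclideanSpace ℝ (Fin k)) (R/2)) +
            ν (ball (0 : EuclideanSpace ℝ (Fin k)) (R/2))ᶜ := measure_union_le _ _
        _ = ν (ball (0 : EuclideanSpace ℝ (Fin k)) (R/2)) := by rw [hsupp, add_zero]
    have hball : ∀ r : ℝ, 2*R < r → ν Set.univ ≤ ν (ball x r) := by
      intro r hr
      refine hνU.trans (measure_mono fun y hy => ?_)
      rw [mem_ball] at hy ⊢
      calc dist y x ≤ dist y 0 + dist 0 x := dist_triangle _ _ _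
        _ < R/2 + R := by
            have h0x : dist (0 : EuclideanSpace ℝ (Fin k)) x = ‖x‖ := by
              rw [dist_comm, dist_zero_right]
            rw [h0x]
            exact add_lt_add hy hx
        _ ≤ r := by linarith
    set f : ℝ → ℝ≥0∞ := fun r => ν (ball x r) * ENNReal.ofReal (m * r ^ (-m - 1)) with hf
    have step1 : (∫⁻ r in Set.Ioi t, ν (ball x (r - t)) * ENNReal.ofReal (m * r ^ (-m - 1)))
        ≤ ∫⁻ r in Set.Ioi t, f r :=
      lintegral_mono fun r => mul_le_mul_left (measure_mono (ball_subset_ball (by linarith))) _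
    have hsplit : (∫⁻ r in Set.Ioi t, f r)
        = (∫⁻ r in Set.Ioc t (4*R), f r) + ∫⁻ r in Set.Ioi (4*R), f r := by
      rw [← Set.Ioc_union_Ioi_eq_Ioi (by linarith : t ≤ 4*R),
        lintegral_union measurableSet_Ioi (Set.Ioc_disjoint_Ioi le_rfl)]
    have htail : (∫⁻ r in Set.Ioi (4*R), f r) ≤ ν Set.univ * ENNReal.ofReal ((4*R) ^ (-m)) := by
      calc (∫⁻ r in Set.Ioi (4*R), f r)
          ≤ ∫⁻ r in Set.Ioi (4*R), ν Set.univ * ENNReal.ofReal (m * r ^ (-m-1)) :=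
            lintegral_mono fun r => mul_le_mul_left (measure_mono (Set.subset_univ _)) _
        _ = ν Set.univ * ∫⁻ r in Set.Ioi (4*R), ENNReal.ofReal (m * r ^ (-m-1)) :=
            lintegral_const_mul' _ _ (measure_ne_top ν _)
        _ = ν Set.univ * ENNReal.ofReal ((4*R) ^ (-m)) := by
            rw [← key_ofReal hm (by linarith : (0:ℝ) < 4*R)]
    have hmid : ν Set.univ * ENNReal.ofReal ((2*R) ^ (-m) - (4*R) ^ (-m))
        ≤ ∫⁻ r in Set.Ioc (2*R) (4*R), f r := by
      calc ν Set.univ * ENNReal.ofReal ((2*R) ^ (-m) - (4*R) ^ (-m))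
          = ν Set.univ * ∫⁻ r in Set.Ioc (2*R) (2*(2*R)), ENNReal.ofReal (m * r ^ (-m-1)) := by
            rw [mid_calc hm (by linarith : (0:ℝ) < 2*R)]
            norm_num [show 2*(2*R) = 4*R by ring]
        _ = ∫⁻ r in Set.Ioc (2*R) (4*R), ν Set.univ * ENNReal.ofReal (m * r ^ (-m-1)) := by
            rw [lintegral_const_mul' _ _ (measure_ne_top ν _), show 2*(2*R) = 4*R by ring]
        _ ≤ ∫⁻ r in Set.Ioc (2*R) (4*R), f r := by
            apply lintegral_mono_ae
            filter_upwards [ae_restrict_mem measurableSet_Ioc] with r hr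
            exact mul_le_mul_left (hball r hr.1) _
    have hmid' : (∫⁻ r in Set.Ioc (2*R) (4*R), f r) ≤ ∫⁻ r in Set.Ioc t (4*R), f r :=
      lintegral_mono_set (Set.Ioc_subset_Ioc_left (by linarith))
    have hKreal : (4*R) ^ (-m) ≤ (1/((2:ℝ)^m - 1)) * ((2*R) ^ (-m) - (4*R) ^ (-m)) := by
      have h4 : (4*R : ℝ) ^ (-m) = (2:ℝ)^(-m) * (2*R) ^ (-m) := by
        rw [show (4*R : ℝ) = 2 * (2*R) by ring, Real.mul_rpow (by norm_num) (by linarith)]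
      have h2inv : (2:ℝ)^(-m) = ((2:ℝ)^m)⁻¹ := Real.rpow_neg (by norm_num) m
      have hu : (0:ℝ) < (2*R) ^ (-m) := Real.rpow_pos_of_pos (by linarith) _
      rw [h4, h2inv]
      rw [div_mul_eq_mul_div, le_div_iff₀ (by linarith)]
      have h2mpos : (0:ℝ) < (2:ℝ)^m := by linarith
      field_simp
      ring_nf
      nlinarith [hu, h2mpos]
    have hK : ν Set.univ * ENNReal.ofReal ((4*R) ^ (-m))
        ≤ ENNReal.ofReal (1/((2:ℝ)^m - 1)) *
          (ν Set.univ * ENNReal.ofReal ((2*R) ^ (-m) - (4*R) ^ (-m))) := by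
      have h1 : (0:ℝ) < (2:ℝ)^m - 1 := by linarith
      rw [mul_left_comm, ← ENNReal.ofReal_mul (le_of_lt (one_div_pos.mpr h1))]
      exact mul_le_mul_right (ENNReal.ofReal_le_ofReal hKreal) _
    have hJ1 : (∫⁻ r in Set.Ioc t (4*R), f r)
        = ENNReal.ofReal m * ∫⁻ r in Set.Ioc t (4*R),
            ν (ball x r) * ENNReal.ofReal (r ^ (-m - 1)) := by
      rw [← lintegral_const_mul' _ _ ENNReal.ofReal_ne_top]
      congr 1; funext r
      simp only [hf]
      rw [ENNReal.ofReal_mul hm.le]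
      ring
    calc (∫⁻ r in Set.Ioi t, ν (ball x (r - t)) * ENNReal.ofReal (m * r ^ (-m - 1)))
        ≤ (∫⁻ r in Set.Ioc t (4*R), f r) + ∫⁻ r in Set.Ioi (4*R), f r := by
          rw [← hsplit]; exact step1
      _ ≤ (∫⁻ r in Set.Ioc t (4*R), f r) +
            ENNReal.ofReal (1/((2:ℝ)^m - 1)) * ∫⁻ r in Set.Ioc t (4*R), f r := by
          gcongr
          exact htail.trans (hK.trans (mul_le_mul_right (hmid.trans hmid') _))
      _ = ENNReal.ofReal (1 + 1/((2:ℝ)^m - 1)) * ∫⁻ r in Set.Ioc t (4*R), f r := by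
          have h1 : (0:ℝ) < (2:ℝ)^m - 1 := by linarith
          rw [ENNReal.ofReal_add zero_le_one (le_of_lt (one_div_pos.mpr h1)),
            ENNReal.ofReal_one, add_mul, one_mul]
      _ = ENNReal.ofReal ((1 + 1/((2:ℝ)^m - 1)) * m) *
            ∫⁻ r in Set.Ioc t (4*R), ν (ball x r) * ENNReal.ofReal (r ^ (-m - 1)) := by
          have h1 : (0:ℝ) < (2:ℝ)^m - 1 := by linarith
          rw [hJ1, ENNReal.ofReal_mul (by nlinarith [one_div_pos.mpr h1]), mul_assoc]
end
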